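/- arXiv:1910.07833 — 7 statements merged into one kernel-verified Lean document; each statement's English description precedes it below -/
import Mathlib

section
/- Let Y be a real random variable and a, b ≥ 0. Suppose that for every δ ∈ (0,1), with probability at least 1 − δ, |Y| ≤ a·√(log(e/δ)) + b·log(e/δ). Then for every p ≥ 1, (E|Y|^p)^{1/p} ≤ 3√p·a + 9p·b. -/
/-!
Let `U` be the least `u ≥ 1` with `|Y| ≤ a √u + b u`. The hypothesis gives `P(U > t) ≤ e^(1 - t)`
for `t > 1`, and the layer-cake formula turns this exponential tail into `E U^q ≤ (9q/2)^q`
for `q ≥ 1/2`. Since `|Y|^p ≤ (2a √U)^p + (2b U)^p`, the cases `q = p/2` and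
`q = p` give `E |Y|^p ≤ (3 √p a)^p + (9 p b)^p ≤ (3 √p a + 9 p b)^p`.
-/

open MeasureTheory Real Set Filter
open scoped ENNReal

namespace Real

lemma rpow_add_le_two_mul_rpow_add_two_mul_rpow {x y p : ℝ} (hx : 0 ≤ x) (hy : 0 ≤ y)
    (hp : 0 ≤ p) : (x + y) ^ p ≤ (2 * x) ^ p + (2 * y) ^ p := by
  have hmax : (x + y) ^ p ≤ max ((2 * x) ^ p) ((2 * y) ^ p) := by
    rcases le_total x y with h | h
    · exact (rpow_le_rpow (by positivity) (by linarith) hp).trans (le_max_right _ _)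
    · exact (rpow_le_rpow (by positivity) (by linarith) hp).trans (le_max_left _ _)
  exact hmax.trans (max_le_add_of_nonneg (by positivity) (by positivity))

lemma rpow_sub_one_le_mul_exp {q t : ℝ} (hq : 1 ≤ q) (ht : 0 < t) :
    t ^ (q - 1) ≤ (2 * q) ^ (q - 1) * exp (t / 2 + 1 - q) := by
  have hx : 0 < t / (2 * q) := by positivity
  -- `t = 2q` roughly maximises `t ^ (q - 1) * exp (-t / 2)`; compare there using `log x ≤ x - 1`.
  have hlog : (q - 1) * log (t / (2 * q)) ≤ t / 2 + 1 - q := by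
    have h1 := mul_le_mul_of_nonneg_left (log_le_sub_one_of_pos hx) (by linarith : 0 ≤ q - 1)
    have h2 : (q - 1) * (t / (2 * q) - 1) = t / 2 + 1 - q - t / (2 * q) := by
      field_simp
      ring
    linarith
  calc t ^ (q - 1) = (2 * q) ^ (q - 1) * (t / (2 * q)) ^ (q - 1) := by
        rw [← mul_rpow (by positivity) hx.le, mul_div_cancel₀ _ (by positivity)]
    _ ≤ (2 * q) ^ (q - 1) * exp (t / 2 + 1 - q) := by
        gcongr
        rw [rpow_def_of_pos hx, mul_comm]
        exact exp_le_exp.2 hlog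

lemma one_add_le_rpow_of_le_one {q : ℝ} (hq : 1 / 2 ≤ q) (hq1 : q ≤ 1) :
    1 + q ≤ (9 / 2 * q) ^ q := by
  have h45 : 1 ≤ 9 / 2 * q := by linarith
  calc 1 + q ≤ sqrt (9 / 2 * q) := by
        rw [le_sqrt (by linarith) (by linarith)]
        nlinarith
    _ = (9 / 2 * q) ^ (1 / 2 : ℝ) := sqrt_eq_rpow _
    _ ≤ (9 / 2 * q) ^ q := rpow_le_rpow_of_exponent_le h45 hq

lemma one_add_rpow_mul_exp_le_rpow {q : ℝ} (hq : 1 ≤ q) :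
    1 + (2 * q) ^ q * exp (3 / 2 - q) ≤ (9 / 2 * q) ^ q := by
  have h2q : 2 ≤ (2 * q) ^ q := by
    calc (2 : ℝ) ≤ (2 * q) ^ (1 : ℝ) := by rw [rpow_one]; linarith
      _ ≤ (2 * q) ^ q := rpow_le_rpow_of_exponent_le (by linarith) hq
  have hexp : exp (3 / 2 - q) ≤ 7 / 4 := by
    have hsq : exp (1 / 2) * exp (1 / 2) = exp 1 := by rw [← exp_add]; norm_num
    have : exp (1 / 2) ≤ 7 / 4 := by nlinarith [exp_one_lt_d9, exp_pos (1 / 2)]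
    exact (exp_le_exp.2 (by linarith)).trans this
  have h94 : 9 / 4 ≤ (9 / 4 : ℝ) ^ q := by
    simpa using rpow_le_rpow_of_exponent_le (by norm_num : (1 : ℝ) ≤ 9 / 4) hq
  calc 1 + (2 * q) ^ q * exp (3 / 2 - q) ≤ (2 * q) ^ q * (9 / 4) := by nlinarith
    _ ≤ (2 * q) ^ q * (9 / 4) ^ q := by gcongr
    _ = (9 / 2 * q) ^ q := by
        rw [← mul_rpow (by linarith) (by norm_num)]
        ring_nf

end Real

lemma integral_mul_rpow_sub_one {q : ℝ} (hq : 0 < q) (x : ℝ) :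
    ∫ s in (0 : ℝ)..x, q * s ^ (q - 1) = x ^ q := by
  rw [intervalIntegral.integral_const_mul, integral_rpow (Or.inl (by linarith)),
    sub_add_cancel, zero_rpow hq.ne', sub_zero]
  field_simp

lemma lintegral_ofReal_rpow_eq_lintegral_meas_lt_mul {α : Type*} [MeasurableSpace α]
    (μ : Measure α) {f : α → ℝ} (hf0 : 0 ≤ᵐ[μ] f) (hf : AEMeasurable f μ) {q : ℝ} (hq : 0 < q) :
    ∫⁻ ω, ENNReal.ofReal (f ω ^ q) ∂μ =
      ∫⁻ t in Ioi 0, μ {ω | t < f ω} * ENNReal.ofReal (q * t ^ (q - 1)) := by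
  have hint : ∀ t > (0 : ℝ), IntervalIntegrable (fun s ↦ q * s ^ (q - 1)) volume 0 t :=
    fun _ _ ↦ (intervalIntegral.intervalIntegrable_rpow' (by linarith)).const_mul q
  have hnn : ∀ᵐ t ∂volume.restrict (Ioi (0 : ℝ)), 0 ≤ q * t ^ (q - 1) := by
    filter_upwards [ae_restrict_mem measurableSet_Ioi] with t (ht : 0 < t)
    positivity
  simpa only [integral_mul_rpow_sub_one hq] using
    lintegral_comp_eq_lintegral_meas_lt_mul μ hf0 hf hint hnn

lemma lintegral_Ioc_zero_one_mul_rpow_sub_one {q : ℝ} (hq : 0 < q) :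
    ∫⁻ t in Ioc (0 : ℝ) 1, ENNReal.ofReal (q * t ^ (q - 1)) = 1 := by
  have hint : IntegrableOn (fun t ↦ q * t ^ (q - 1)) (Ioc (0 : ℝ) 1) := by
    rw [← intervalIntegrable_iff_integrableOn_Ioc_of_le zero_le_one]
    exact (intervalIntegral.intervalIntegrable_rpow' (by linarith)).const_mul q
  have hnn : 0 ≤ᵐ[volume.restrict (Ioc (0 : ℝ) 1)] fun t ↦ q * t ^ (q - 1) := by
    filter_upwards [ae_restrict_mem measurableSet_Ioc] with t ht
    exact mul_nonneg hq.le (rpow_nonneg ht.1.le _)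
  rw [← ofReal_integral_eq_lintegral_ofReal hint hnn,
    ← intervalIntegral.integral_of_le zero_le_one, integral_mul_rpow_sub_one hq, one_rpow,
    ENNReal.ofReal_one]

lemma lintegral_Ioi_ofReal_mul_exp_mul {C a : ℝ} (hC : 0 ≤ C) (ha : a < 0) (c : ℝ) :
    ∫⁻ t in Ioi c, ENNReal.ofReal (C * exp (a * t)) =
      ENNReal.ofReal (C * (-exp (a * c) / a)) := by
  rw [← ofReal_integral_eq_lintegral_ofReal ((integrableOn_exp_mul_Ioi ha c).const_mul C)
    (Eventually.of_forall fun t ↦ by positivity), integral_const_mul, integral_exp_mul_Ioi ha]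

lemma lintegral_Ioi_one_exp_mul_rpow_le_of_le_one {q : ℝ} (hq : 0 ≤ q) (hq1 : q ≤ 1) :
    ∫⁻ t in Ioi (1 : ℝ), ENNReal.ofReal (exp (1 - t) * (q * t ^ (q - 1))) ≤
      ENNReal.ofReal q := by
  calc ∫⁻ t in Ioi (1 : ℝ), ENNReal.ofReal (exp (1 - t) * (q * t ^ (q - 1)))
      ≤ ∫⁻ t in Ioi (1 : ℝ), ENNReal.ofReal (q * exp 1 * exp (-1 * t)) := by
        refine setLIntegral_mono' measurableSet_Ioi fun t (ht : 1 < t) ↦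
          ENNReal.ofReal_le_ofReal ?_
        calc exp (1 - t) * (q * t ^ (q - 1)) ≤ exp (1 - t) * (q * 1) := by
              gcongr
              exact rpow_le_one_of_one_le_of_nonpos ht.le (by linarith)
          _ = q * exp 1 * exp (-1 * t) := by rw [mul_assoc q, ← exp_add]; ring_nf
    _ = ENNReal.ofReal q := by
        rw [lintegral_Ioi_ofReal_mul_exp_mul (by positivity) (by norm_num), mul_assoc, mul_one,
          neg_div, div_neg, div_one, neg_neg, ← exp_add]
        norm_num

lemma lintegral_Ioi_one_exp_mul_rpow_le_of_one_le {q : ℝ} (hq : 1 ≤ q) :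
    ∫⁻ t in Ioi (1 : ℝ), ENNReal.ofReal (exp (1 - t) * (q * t ^ (q - 1))) ≤
      ENNReal.ofReal ((2 * q) ^ q * exp (3 / 2 - q)) := by
  set K := q * (2 * q) ^ (q - 1) * exp (2 - q)
  calc ∫⁻ t in Ioi (1 : ℝ), ENNReal.ofReal (exp (1 - t) * (q * t ^ (q - 1)))
      ≤ ∫⁻ t in Ioi (1 : ℝ), ENNReal.ofReal (K * exp (-(1 / 2) * t)) := by
        refine setLIntegral_mono' measurableSet_Ioi fun t (ht : 1 < t) ↦
          ENNReal.ofReal_le_ofReal ?_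
        calc exp (1 - t) * (q * t ^ (q - 1))
            ≤ exp (1 - t) * (q * ((2 * q) ^ (q - 1) * exp (t / 2 + 1 - q))) := by
              gcongr
              exact rpow_sub_one_le_mul_exp hq (by linarith)
          _ = K * exp (-(1 / 2) * t) := by
              have h : exp (2 - q) * exp (-(1 / 2) * t) = exp (1 - t) * exp (t / 2 + 1 - q) := by
                rw [← exp_add, ← exp_add]
                ring_nf
              simp only [K, mul_assoc, h]
              ring
    _ = ENNReal.ofReal ((2 * q) ^ q * exp (3 / 2 - q)) := by
        rw [lintegral_Ioi_ofReal_mul_exp_mul (by positivity) (by norm_num)]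
        congr 1
        have h2q : (2 * q) ^ q = 2 * q * (2 * q) ^ (q - 1) := by
          rw [← rpow_one_add' (by positivity) (by linarith), add_sub_cancel]
        simp only [K, h2q, div_neg, neg_div, neg_neg]
        rw [show (3 / 2 - q) = (2 - q) + -(1 / 2) * 1 by ring, exp_add]
        field_simp

theorem lintegral_rpow_le_of_meas_lt_le_exp {Ω : Type*} [MeasurableSpace Ω] {μ : Measure Ω}
    [IsProbabilityMeasure μ] {U : Ω → ℝ} (hU : AEMeasurable U μ) (hU0 : 0 ≤ᵐ[μ] U)
    (htail : ∀ t, 1 < t → μ {ω | t < U ω} ≤ ENNReal.ofReal (exp (1 - t)))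
    {q : ℝ} (hq : 1 / 2 ≤ q) :
    ∫⁻ ω, ENNReal.ofReal (U ω ^ q) ∂μ ≤ ENNReal.ofReal ((9 / 2 * q) ^ q) := by
  have hq0 : 0 < q := by linarith
  rw [lintegral_ofReal_rpow_eq_lintegral_meas_lt_mul μ hU0 hU hq0,
    ← Ioc_union_Ioi_eq_Ioi zero_le_one, lintegral_union measurableSet_Ioi Ioc_disjoint_Ioi_same]
  have hsmall : ∫⁻ t in Ioc 0 1, μ {ω | t < U ω} * ENNReal.ofReal (q * t ^ (q - 1)) ≤
      ENNReal.ofReal 1 := by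
    rw [ENNReal.ofReal_one, ← lintegral_Ioc_zero_one_mul_rpow_sub_one hq0]
    exact setLIntegral_mono' measurableSet_Ioc fun _ _ ↦ mul_le_of_le_one_left' prob_le_one
  have hlarge : ∫⁻ t in Ioi 1, μ {ω | t < U ω} * ENNReal.ofReal (q * t ^ (q - 1)) ≤
      ∫⁻ t in Ioi (1 : ℝ), ENNReal.ofReal (exp (1 - t) * (q * t ^ (q - 1))) :=
    setLIntegral_mono' measurableSet_Ioi fun t ht ↦ by
      rw [ENNReal.ofReal_mul (exp_pos _).le]
      exact mul_le_mul_left (htail t ht) _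
  obtain ⟨B, hB0, hJ, hB⟩ : ∃ B, 0 ≤ B ∧
      ∫⁻ t in Ioi (1 : ℝ), ENNReal.ofReal (exp (1 - t) * (q * t ^ (q - 1))) ≤
        ENNReal.ofReal B ∧
      1 + B ≤ (9 / 2 * q) ^ q := by
    rcases le_total q 1 with hq1 | hq1
    · exact ⟨q, hq0.le, lintegral_Ioi_one_exp_mul_rpow_le_of_le_one hq0.le hq1,
        one_add_le_rpow_of_le_one hq hq1⟩
    · exact ⟨_, by positivity, lintegral_Ioi_one_exp_mul_rpow_le_of_one_le hq1,
        one_add_rpow_mul_exp_le_rpow hq1⟩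
  calc _ ≤ ENNReal.ofReal 1 + ENNReal.ofReal B := add_le_add hsmall (hlarge.trans hJ)
    _ ≤ ENNReal.ofReal ((9 / 2 * q) ^ q) := by
        rw [← ENNReal.ofReal_add zero_le_one hB0]
        exact ENNReal.ofReal_le_ofReal hB

noncomputable def tailLevel (a b y : ℝ) : ℝ :=
  sInf {u | 1 ≤ u ∧ y ≤ a * √u + b * u}

section TailLevel

variable {a b : ℝ}

lemma tailLevel_set_nonempty (ha : 0 ≤ a) (hb : 0 < b) (y : ℝ) :
    {u | 1 ≤ u ∧ y ≤ a * √u + b * u}.Nonempty := by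
  refine ⟨max 1 (y / b), le_max_left _ _, ?_⟩
  have : y ≤ b * max 1 (y / b) := by
    rw [← div_le_iff₀' hb]
    exact le_max_right _ _
  linarith [mul_nonneg ha (sqrt_nonneg (max 1 (y / b)))]

lemma tailLevel_set_bddBelow (a b y : ℝ) : BddBelow {u | 1 ≤ u ∧ y ≤ a * √u + b * u} :=
  ⟨1, fun _ hu ↦ hu.1⟩

lemma one_le_tailLevel_and_le (ha : 0 ≤ a) (hb : 0 < b) (y : ℝ) :
    1 ≤ tailLevel a b y ∧ y ≤ a * √(tailLevel a b y) + b * tailLevel a b y := by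
  have hcont : Continuous fun u ↦ a * √u + b * u := by fun_prop
  have hclosed : IsClosed {u | 1 ≤ u ∧ y ≤ a * √u + b * u} :=
    isClosed_Ici.inter (isClosed_le continuous_const hcont)
  exact hclosed.csInf_mem (tailLevel_set_nonempty ha hb y) (tailLevel_set_bddBelow a b y)

lemma tailLevel_mono (ha : 0 ≤ a) (hb : 0 < b) : Monotone (tailLevel a b) :=
  fun _ y₂ h ↦ csInf_le_csInf (tailLevel_set_bddBelow a b _) (tailLevel_set_nonempty ha hb y₂)
    fun _ hu ↦ ⟨hu.1, h.trans hu.2⟩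

lemma lt_of_lt_tailLevel {y t : ℝ} (ht : 1 ≤ t) (h : t < tailLevel a b y) :
    a * √t + b * t < y :=
  not_le.1 fun hy ↦ h.not_ge (csInf_le (tailLevel_set_bddBelow a b y) ⟨ht, hy⟩)

end TailLevel

lemma rpow_le_of_le_mul_sqrt_add_mul {a b u y p : ℝ} (ha : 0 ≤ a) (hb : 0 ≤ b) (hu : 0 ≤ u)
    (hy : 0 ≤ y) (h : y ≤ a * √u + b * u) (hp : 0 ≤ p) :
    y ^ p ≤ (2 * a) ^ p * u ^ (p / 2) + (2 * b) ^ p * u ^ p := by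
  calc y ^ p ≤ (a * √u + b * u) ^ p := rpow_le_rpow hy h hp
    _ ≤ (2 * (a * √u)) ^ p + (2 * (b * u)) ^ p :=
        rpow_add_le_two_mul_rpow_add_two_mul_rpow (by positivity) (by positivity) hp
    _ = (2 * a) ^ p * u ^ (p / 2) + (2 * b) ^ p * u ^ p := by
        rw [← mul_assoc, ← mul_assoc, mul_rpow (by positivity) (sqrt_nonneg u),
          mul_rpow (by positivity) hu, sqrt_eq_rpow, ← rpow_mul hu, one_div_mul_eq_div]

lemma rpow_integral_le_of_lintegral_le {α : Type*} [MeasurableSpace α] {μ : Measure α}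
    {f : α → ℝ} (hf : AEStronglyMeasurable f μ) (hf0 : 0 ≤ᵐ[μ] f) {p R : ℝ} (hp : 0 < p)
    (hR : 0 ≤ R) (h : ∫⁻ ω, ENNReal.ofReal (f ω) ∂μ ≤ ENNReal.ofReal (R ^ p)) :
    (∫ ω, f ω ∂μ) ^ (1 / p) ≤ R := by
  rw [integral_eq_lintegral_of_nonneg_ae hf0 hf]
  calc (∫⁻ ω, ENNReal.ofReal (f ω) ∂μ).toReal ^ (1 / p) ≤ (R ^ p) ^ (1 / p) := by
        gcongr
        exact ENNReal.toReal_le_of_le_ofReal (by positivity) h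
    _ = R := by rw [← rpow_mul hR, mul_one_div_cancel hp.ne', rpow_one]

section TailToMoment

variable {Ω : Type*} [MeasurableSpace Ω] {μ : Measure Ω} [IsProbabilityMeasure μ] {Y : Ω → ℝ}
  {a b : ℝ}

lemma meas_lt_abs_le_exp_of_tail (hY : Measurable Y)
    (htail : ∀ δ : ℝ, 0 < δ → δ < 1 →
      ENNReal.ofReal (1 - δ) ≤
        μ {ω | |Y ω| ≤ a * √(log (exp 1 / δ)) + b * log (exp 1 / δ)})
    {t : ℝ} (ht : 1 < t) :
    μ {ω | a * √t + b * t < |Y ω|} ≤ ENNReal.ofReal (exp (1 - t)) := by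
  have hδ1 : exp (1 - t) < 1 := exp_lt_one_iff.2 (by linarith)
  have hlog : log (exp 1 / exp (1 - t)) = t := by rw [← exp_sub, log_exp]; ring
  have h := htail (exp (1 - t)) (exp_pos _) hδ1
  rw [hlog] at h
  calc μ {ω | a * √t + b * t < |Y ω|} = μ {ω | |Y ω| ≤ a * √t + b * t}ᶜ := by
        congr 1
        ext
        simp
    _ = 1 - μ {ω | |Y ω| ≤ a * √t + b * t} :=
        prob_compl_eq_one_sub (measurableSet_le hY.abs measurable_const)
    _ ≤ 1 - ENNReal.ofReal (1 - exp (1 - t)) := tsub_le_tsub_left h 1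
    _ = ENNReal.ofReal (exp (1 - t)) := by
        rw [← ENNReal.ofReal_one, ← ENNReal.ofReal_sub _ (by linarith), sub_sub_cancel]

lemma lintegral_abs_rpow_le_of_meas_lt_le_exp (hY : Measurable Y) (ha : 0 ≤ a) (hb : 0 < b)
    (htail : ∀ t, 1 < t → μ {ω | a * √t + b * t < |Y ω|} ≤ ENNReal.ofReal (exp (1 - t)))
    {p : ℝ} (hp : 1 ≤ p) :
    ∫⁻ ω, ENNReal.ofReal (|Y ω| ^ p) ∂μ ≤
      ENNReal.ofReal ((3 * √p * a) ^ p) + ENNReal.ofReal ((9 * p * b) ^ p) := by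
  set U : Ω → ℝ := fun ω ↦ tailLevel a b |Y ω|
  have hU : Measurable U := (tailLevel_mono ha hb).measurable.comp hY.abs
  have hU0 : ∀ ω, 0 ≤ U ω := fun ω ↦ zero_le_one.trans (one_le_tailLevel_and_le ha hb _).1
  have hUtail : ∀ t, 1 < t → μ {ω | t < U ω} ≤ ENNReal.ofReal (exp (1 - t)) := fun t ht ↦
    (measure_mono fun _ hω ↦ lt_of_lt_tailLevel ht.le hω).trans (htail t ht)
  have hmoment (q : ℝ) (hq : 1 / 2 ≤ q) (c : ℝ) (hc : 0 ≤ c) :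
      ∫⁻ ω, ENNReal.ofReal (c ^ p * U ω ^ q) ∂μ ≤ ENNReal.ofReal (c ^ p * (9 / 2 * q) ^ q) := by
    simp only [ENNReal.ofReal_mul (rpow_nonneg hc p)]
    rw [lintegral_const_mul _ (hU.pow_const q).ennreal_ofReal]
    gcongr
    exact lintegral_rpow_le_of_meas_lt_le_exp hU.aemeasurable (ae_of_all _ hU0) hUtail hq
  have hsqrt : (2 * a) ^ p * (9 / 2 * (p / 2)) ^ (p / 2) = (3 * √p * a) ^ p := by
    have h94 : √(9 / 4 : ℝ) = 3 / 2 := by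
      rw [show (9 / 4 : ℝ) = (3 / 2) ^ 2 by norm_num, sqrt_sq (by norm_num)]
    have h : (9 / 2 * (p / 2)) ^ (p / 2) = (3 / 2 * √p) ^ p := by
      rw [← h94, ← sqrt_mul (by norm_num), sqrt_eq_rpow, ← rpow_mul (by positivity)]
      ring_nf
    rw [h, ← mul_rpow (by positivity) (by positivity)]
    ring_nf
  have hlin : (2 * b) ^ p * (9 / 2 * p) ^ p = (9 * p * b) ^ p := by
    rw [← mul_rpow (by positivity) (by positivity)]
    ring_nf
  calc ∫⁻ ω, ENNReal.ofReal (|Y ω| ^ p) ∂μ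
      ≤ ∫⁻ ω, ENNReal.ofReal ((2 * a) ^ p * U ω ^ (p / 2)) +
          ENNReal.ofReal ((2 * b) ^ p * U ω ^ p) ∂μ :=
        lintegral_mono fun ω ↦ (ENNReal.ofReal_le_ofReal (rpow_le_of_le_mul_sqrt_add_mul ha hb.le
          (hU0 ω) (abs_nonneg _) (one_le_tailLevel_and_le ha hb _).2 (by linarith))).trans
          ENNReal.ofReal_add_le
    _ = ∫⁻ ω, ENNReal.ofReal ((2 * a) ^ p * U ω ^ (p / 2)) ∂μ +
          ∫⁻ ω, ENNReal.ofReal ((2 * b) ^ p * U ω ^ p) ∂μ :=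
        lintegral_add_left ((measurable_const.mul (hU.pow_const _)).ennreal_ofReal) _
    _ ≤ _ := by
        rw [← hsqrt, ← hlin]
        gcongr
        · exact hmoment _ (by linarith) _ (by linarith)
        · exact hmoment _ (by linarith) _ (by linarith)

lemma rpow_integral_abs_rpow_le_of_meas_lt_le_exp (hY : Measurable Y) (ha : 0 ≤ a)
    (hb : 0 < b)
    (htail : ∀ t, 1 < t → μ {ω | a * √t + b * t < |Y ω|} ≤ ENNReal.ofReal (exp (1 - t)))
    {p : ℝ} (hp : 1 ≤ p) :
    (∫ ω, |Y ω| ^ p ∂μ) ^ (1 / p) ≤ 3 * √p * a + 9 * p * b := by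
  refine rpow_integral_le_of_lintegral_le (hY.abs.pow_const p).aestronglyMeasurable
    (ae_of_all _ fun ω ↦ by positivity) (by linarith) (by positivity) ?_
  calc ∫⁻ ω, ENNReal.ofReal (|Y ω| ^ p) ∂μ
      ≤ ENNReal.ofReal ((3 * √p * a) ^ p) + ENNReal.ofReal ((9 * p * b) ^ p) :=
        lintegral_abs_rpow_le_of_meas_lt_le_exp hY ha hb htail hp
    _ ≤ ENNReal.ofReal ((3 * √p * a + 9 * p * b) ^ p) := by
        rw [← ENNReal.ofReal_add (by positivity) (by positivity)]
        exact ENNReal.ofReal_le_ofReal (add_rpow_le_rpow_add (by positivity) (by positivity) hp)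

end TailToMoment

theorem tail_to_moment {Ω : Type*} [MeasurableSpace Ω] (μ : Measure Ω)
    [IsProbabilityMeasure μ] (Y : Ω → ℝ) (hY : Measurable Y)
    (a b : ℝ) (ha : 0 ≤ a) (hb : 0 ≤ b)
    (htail : ∀ δ : ℝ, 0 < δ → δ < 1 →
      ENNReal.ofReal (1 - δ) ≤
        μ {ω | |Y ω| ≤ a * Real.sqrt (Real.log (Real.exp 1 / δ)) +
          b * Real.log (Real.exp 1 / δ)}) :
    ∀ p : ℝ, 1 ≤ p →
      (∫ ω, |Y ω| ^ p ∂μ) ^ (1 / p) ≤ 3 * Real.sqrt p * a + 9 * p * b := by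
  intro p hp
  -- `tailLevel a 0 y` is `sInf ∅` for large `y`: prove the bound for `b + ε / (9p)`, `ε → 0`.
  refine le_of_forall_pos_le_add fun ε hε ↦ ?_
  have htail' (t : ℝ) (ht : 1 < t) :
      μ {ω | a * √t + (b + ε / (9 * p)) * t < |Y ω|} ≤ ENNReal.ofReal (exp (1 - t)) := by
    have hle : a * √t + b * t ≤ a * √t + (b + ε / (9 * p)) * t := by
      gcongr
      exact le_add_of_nonneg_right (by positivity)
    exact (measure_mono fun ω (hω : _ < |Y ω|) ↦ hle.trans_lt hω).trans
      (meas_lt_abs_le_exp_of_tail hY htail ht)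
  calc (∫ ω, |Y ω| ^ p ∂μ) ^ (1 / p) ≤ 3 * √p * a + 9 * p * (b + ε / (9 * p)) :=
        rpow_integral_abs_rpow_le_of_meas_lt_le_exp hY ha (by positivity) htail' hp
    _ = 3 * √p * a + 9 * p * b + ε := by field_simp; ring
end

section
/- Let X_1, …, X_n be independent real random variables with E X_i = 0 and |X_i| ≤ M almost surely for all i. Then for every p ≥ 2, ‖∑_{i=1}^n X_i‖_p ≤ 4√(np)·M. -/
open MeasureTheory ProbabilityTheory Real

open scoped NNReal

/-!
By Hoeffding's lemma each `X i` is sub-Gaussian with variance proxy `M ^ 2`, so by independence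
the sum is sub-Gaussian with proxy `n * M ^ 2`. For a sub-Gaussian `X` with proxy `c`, the
elementary bound `|x| ^ p ≤ (p / t) ^ p * (exp (t x) + exp (-t x))` turns the bound on the
moment-generating function into `E |X| ^ p ≤ 2 (p / t) ^ p exp (c t ^ 2 / 2)`, and at
`t = √(p / c)` this gives `‖X‖_p ≤ 2 ^ (1 / p) * exp (1 / 2) * √(c p) ≤ 4 √(c p)`.
-/

namespace ProbabilityTheory.HasSubgaussianMGF

variable {Ω : Type*} {mΩ : MeasurableSpace Ω} {μ : Measure Ω} {X : Ω → ℝ} {c : ℝ≥0} {p : ℝ}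

lemma integral_abs_rpow_le (h : HasSubgaussianMGF X c μ) (hp : 0 ≤ p) {t : ℝ} (ht : 0 < t) :
    ∫ ω, |X ω| ^ p ∂μ ≤ 2 * (p / t) ^ p * exp (c * t ^ 2 / 2) := by
  have h_pointwise (x : ℝ) : |x| ^ p ≤ (p / t) ^ p * (exp (t * x) + exp (-t * x)) :=
    (rpow_abs_le_mul_max_exp_of_pos x hp ht).trans <| by
      gcongr; exact max_le_add_of_nonneg (exp_nonneg _) (exp_nonneg _)
  calc ∫ ω, |X ω| ^ p ∂μ
      ≤ ∫ ω, (p / t) ^ p * (exp (t * X ω) + exp (-t * X ω)) ∂μ :=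
        integral_mono_of_nonneg (ae_of_all _ fun _ ↦ by positivity)
          (((h.integrable_exp_mul t).add (h.integrable_exp_mul (-t))).const_mul _)
          (ae_of_all _ fun ω ↦ h_pointwise (X ω))
    _ = (p / t) ^ p * (mgf X μ t + mgf X μ (-t)) := by
        rw [integral_const_mul, integral_add (h.integrable_exp_mul t) (h.integrable_exp_mul (-t))]
        rfl
    _ ≤ (p / t) ^ p * (exp (c * t ^ 2 / 2) + exp (c * (-t) ^ 2 / 2)) := by
        gcongr
        exacts [h.mgf_le t, h.mgf_le (-t)]
    _ = 2 * (p / t) ^ p * exp (c * t ^ 2 / 2) := by rw [neg_sq]; ring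

lemma rpow_integral_abs_rpow_le (h : HasSubgaussianMGF X c μ) (hp : 1 ≤ p) :
    (∫ ω, |X ω| ^ p ∂μ) ^ (1 / p) ≤ 4 * √(c * p) := by
  have hp0 : 0 < p := zero_lt_one.trans_le hp
  rcases eq_zero_or_pos c with rfl | hc
  · have h_zero : ∫ ω, |X ω| ^ p ∂μ = 0 := by
      refine (integral_congr_ae ?_).trans (integral_zero Ω ℝ)
      filter_upwards [h.ae_eq_zero_of_hasSubgaussianMGF_zero] with ω hω
      simp [hω, zero_rpow hp0.ne']
    rw [h_zero, zero_rpow (one_div_ne_zero hp0.ne')]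
    positivity
  set s := √(c * p)
  have hs0 : 0 < s := by positivity
  have hs_sq : s ^ 2 = c * p := sq_sqrt (by positivity)
  -- the Chernoff parameter `t = p / s` balances `(p / t) ^ p` against `exp (c t² / 2) = exp (p / 2)`
  have h_moment : ∫ ω, |X ω| ^ p ∂μ ≤ 2 * s ^ p * exp (p / 2) := by
    convert h.integral_abs_rpow_le hp0.le (div_pos hp0 hs0) using 3
    · field_simp
    · field_simp; rw [hs_sq]; ring
  have h_exp_half : exp (1 / 2) ≤ 2 := by
    have := exp_bound_div_one_sub_of_interval' (x := 1 / 2) (by norm_num) (by norm_num)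
    norm_num at this; exact this.le
  rw [one_div, rpow_inv_le_iff_of_pos (integral_nonneg fun _ ↦ by positivity) (by positivity) hp0]
  calc ∫ ω, |X ω| ^ p ∂μ ≤ 2 * s ^ p * exp (p / 2) := h_moment
    _ = 2 * s ^ p * exp (1 / 2) ^ p := by rw [← exp_mul]; ring_nf
    _ ≤ 2 ^ p * s ^ p * 2 ^ p := by
        gcongr
        exact self_le_rpow_of_one_le one_le_two hp
    _ = (4 * s) ^ p := by
        rw [mul_rpow (by norm_num) hs0.le, show (4 : ℝ) = 2 * 2 by norm_num,
          mul_rpow (by norm_num) (by norm_num)]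
        ring

end ProbabilityTheory.HasSubgaussianMGF

theorem hoeffding_moment {Ω : Type*} [MeasurableSpace Ω] (μ : Measure Ω)
    [IsProbabilityMeasure μ] (n : ℕ)
    (X : Fin n → Ω → ℝ) (hX : ∀ i, Measurable (X i))
    (hindep : iIndepFun X μ)
    (M : ℝ) (hbdd : ∀ i, ∀ᵐ ω ∂μ, |X i ω| ≤ M)
    (hmean : ∀ i, ∫ ω, X i ω ∂μ = 0) :
    ∀ p : ℝ, 2 ≤ p →
      (∫ ω, |∑ i, X i ω| ^ p ∂μ) ^ (1 / p) ≤ 4 * Real.sqrt (n * p) * M := by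
  intro p hp
  have h_subG (i : Fin n) (_ : i ∈ Finset.univ) :
      HasSubgaussianMGF (X i) ((‖M - -M‖₊ / 2) ^ 2) μ :=
    hasSubgaussianMGF_of_mem_Icc_of_integral_eq_zero (hX i).aemeasurable
      (by filter_upwards [hbdd i] with ω hω using abs_le.mp hω) (hmean i)
  have h_sum := (HasSubgaussianMGF.sum_of_iIndepFun hindep h_subG).rpow_integral_abs_rpow_le
    (one_le_two.trans hp)
  have h_var : ((∑ _i : Fin n, (‖M - -M‖₊ / 2) ^ 2 : ℝ≥0) : ℝ) * p = M ^ 2 * (n * p) := by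
    push_cast
    simp only [Finset.sum_const, Finset.card_univ, Fintype.card_fin, nsmul_eq_mul,
      Real.norm_eq_abs, sub_neg_eq_add, ← two_mul, abs_mul, abs_two, div_pow, mul_pow, sq_abs]
    ring
  have h_scale : √(n * p) * |M| = √(n * p) * M := by
    rcases n.eq_zero_or_pos with rfl | hn
    · simp
    · obtain ⟨ω, hω⟩ := (hbdd ⟨0, hn⟩).exists
      rw [abs_of_nonneg ((abs_nonneg _).trans hω)]
  calc (∫ ω, |∑ i, X i ω| ^ p ∂μ) ^ (1 / p) ≤ 4 * √(M ^ 2 * (n * p)) := by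
        simpa only [h_var] using h_sum
    _ = 4 * √(n * p) * M := by
        rw [sqrt_mul' _ (by positivity), sqrt_sq_eq_abs, mul_assoc, mul_comm |M|, h_scale]
end

section
/- Let Z_1,…,Z_n be independent random variables and g_1,…,g_n: 𝒵^n → ℝ such that for each i, g_i has the bounded differences property with constant β in every coordinate except the i-th, and E[g_i(Z) | Z_{[n]∖{i}}] = 0 almost surely. Then for all i ≠ j, |E[g_i(Z) g_j(Z)]| ≤ 4β². -/
/-!
Push everything forward to the product space `Π k, 𝒵` carrying the product of the laws of
the `Z k`. There the conditional expectation given all coordinates but `i` is the average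
`A_i = coordAvg μ i` over the `i`-th coordinate, so the hypothesis says `A_i g_i = 0` a.e.
Put `k = A_j g_i` and `h = A_i g_j`. Bounded differences give `|g_i - k| ≤ β` and
`|g_j - h| ≤ β`, and in
`g_i g_j = (g_i - k) (g_j - h) + g_i h + k g_j - k h`
the last three terms have mean zero: `h` does not depend on the `i`-th coordinate, `k` not on
the `j`-th, and `A_i k = A_j A_i g_i = 0` by Fubini. Hence `|E g_i g_j| ≤ β² ≤ 4 β²`.
-/

open Function

namespace MeasureTheory

variable {ι : Type*} [DecidableEq ι] {α : ι → Type*} [∀ i, MeasurableSpace (α i)]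

section ProductSpace

variable (μ : ∀ i, Measure (α i))

noncomputable def coordAvg (i : ι) (f : (∀ k, α k) → ℝ) (z : ∀ k, α k) : ℝ :=
  ∫ t, f (update z i t) ∂μ i

theorem coordAvg_update (i : ι) (f : (∀ k, α k) → ℝ) (z : ∀ k, α k) (t : α i) :
    coordAvg μ i f (update z i t) = coordAvg μ i f z := by
  simp only [coordAvg, update_idem]

theorem coordAvg_mul_of_update_eq (i : ι) (f : (∀ k, α k) → ℝ) {h : (∀ k, α k) → ℝ}
    (hh : ∀ z t, h (update z i t) = h z) (z : ∀ k, α k) :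
    coordAvg μ i (fun x => f x * h x) z = coordAvg μ i f z * h z := by
  simp only [coordAvg, hh]
  exact integral_mul_const _ _

theorem StronglyMeasurable.exists_eq_comp_restrict_of_update_eq {i : ι}
    {F : (∀ k, α k) → ℝ} (hF : StronglyMeasurable F) (hinv : ∀ z t, F (update z i t) = F z)
    (z₀ : ∀ k, α k) :
    ∃ ψ : (∀ j : {j // j ≠ i}, α j) → ℝ, StronglyMeasurable ψ ∧ F = ψ ∘ fun z j => z j := by
  let e := Equiv.piEquivPiSubtypeProd (· ≠ i) α
  refine ⟨fun w => F (e.symm (w, (e z₀).2)), hF.comp_measurable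
    ((measurable_piEquivPiSubtypeProd_symm α _).comp (measurable_id.prodMk measurable_const)), ?_⟩
  ext z
  have hupd : e.symm ((e z).1, (e z₀).2) = update z i (z₀ i) := by
    ext k
    rcases eq_or_ne k i with rfl | hk <;> simp [e, Equiv.piEquivPiSubtypeProd, *]
  simp only [Function.comp_apply]
  rw [← hinv z (z₀ i), ← hupd]
  rfl

theorem StronglyMeasurable.coordAvg [∀ i, SFinite (μ i)] {f : (∀ k, α k) → ℝ}
    (hf : StronglyMeasurable f) (i : ι) :
    StronglyMeasurable (coordAvg μ i f) :=
  (hf.comp_measurable measurable_update').integral_prod_right'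

variable [∀ i, IsProbabilityMeasure (μ i)]

theorem abs_sub_coordAvg_le {i : ι} {f : (∀ k, α k) → ℝ} (hf : Measurable f) {β : ℝ}
    (hβ : ∀ z t, |f (update z i t) - f z| ≤ β) (z : ∀ k, α k) :
    |f z - coordAvg μ i f z| ≤ β := by
  have hbound : ∀ᵐ t ∂μ i, ‖f (update z i t) - f z‖ ≤ β := ae_of_all _ (hβ z)
  have hslice : Integrable (fun t => f (update z i t)) (μ i) := by
    have hm : Measurable fun t => f (update z i t) := hf.comp (measurable_update z)
    simpa using (Integrable.of_bound (hm.sub measurable_const).aestronglyMeasurable β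
      hbound).add (integrable_const (f z))
  have hdiff : coordAvg μ i f z - f z = ∫ t, (f (update z i t) - f z) ∂μ i := by
    rw [integral_sub hslice (integrable_const _), integral_const]
    simp [coordAvg]
  rw [abs_sub_comm, hdiff]
  simpa using norm_integral_le_of_norm_le_const hbound

variable [Fintype ι]

theorem measurePreserving_update (i : ι) :
    MeasurePreserving (fun p : (∀ k, α k) × α i => update p.1 i p.2)
      ((Measure.pi μ).prod (μ i)) (Measure.pi μ) := by
  refine ⟨measurable_update', (Measure.pi_eq fun s hs => ?_).symm⟩
  have hpre : (fun p : (∀ k, α k) × α i => update p.1 i p.2) ⁻¹' Set.univ.pi s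
      = Set.univ.pi (update s i Set.univ) ×ˢ s i := by
    ext ⟨z, t⟩
    simp only [Set.mem_preimage, Set.mem_univ_pi, Set.mem_prod, forall_update_iff]
    refine and_comm.trans (and_congr_left fun _ => ⟨fun hz k => ?_, fun hz k hk => ?_⟩)
    · rcases eq_or_ne k i with rfl | hk
      · simp
      · simpa [hk] using hz k hk
    · simpa [hk] using hz k
  rw [Measure.map_apply measurable_update' (.univ_pi hs), hpre, Measure.prod_prod,
    Measure.pi_pi]
  simp_rw [apply_update (fun k => μ k) s i Set.univ, measure_univ]
  rw [Finset.prod_update_of_mem (Finset.mem_univ i), one_mul, Finset.sdiff_singleton_eq_erase,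
    Finset.prod_erase_mul _ _ (Finset.mem_univ i)]

variable {μ}

theorem Integrable.comp_update {f : (∀ k, α k) → ℝ} (hf : Integrable f (Measure.pi μ)) (i : ι) :
    Integrable (fun p : (∀ k, α k) × α i => f (update p.1 i p.2)) ((Measure.pi μ).prod (μ i)) :=
  ((measurePreserving_update μ i).integrable_comp hf.aestronglyMeasurable).2 hf

theorem Integrable.coordAvg {f : (∀ k, α k) → ℝ} (hf : Integrable f (Measure.pi μ)) (i : ι) :
    Integrable (coordAvg μ i f) (Measure.pi μ) :=
  (hf.comp_update i).integral_prod_left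

theorem integral_coordAvg {f : (∀ k, α k) → ℝ} (hf : Integrable f (Measure.pi μ)) (i : ι) :
    ∫ z, coordAvg μ i f z ∂Measure.pi μ = ∫ z, f z ∂Measure.pi μ := by
  have hU := measurePreserving_update μ i
  calc ∫ z, coordAvg μ i f z ∂Measure.pi μ
      = ∫ p, f (update p.1 i p.2) ∂(Measure.pi μ).prod (μ i) :=
        (integral_prod _ (hf.comp_update i)).symm
    _ = ∫ z, f z ∂((Measure.pi μ).prod (μ i)).map fun p => update p.1 i p.2 :=
        (integral_map hU.measurable.aemeasurable
          (by rw [hU.map_eq]; exact hf.aestronglyMeasurable)).symm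
    _ = ∫ z, f z ∂Measure.pi μ := by rw [hU.map_eq]

theorem setIntegral_coordAvg {i : ι} {S : Set (∀ k, α k)} (hS : MeasurableSet S)
    (hS_inv : ∀ z t, update z i t ∈ S ↔ z ∈ S) {f : (∀ k, α k) → ℝ}
    (hf : Integrable f (Measure.pi μ)) :
    ∫ z in S, coordAvg μ i f z ∂Measure.pi μ = ∫ z in S, f z ∂Measure.pi μ := by
  rw [← integral_indicator hS, ← integral_indicator hS, ← integral_coordAvg (hf.indicator hS) i]
  congr 1
  ext z
  by_cases hz : z ∈ S <;> simp [coordAvg, hS_inv, hz]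

theorem coordAvg_congr_ae {f g : (∀ k, α k) → ℝ} (hfg : f =ᵐ[Measure.pi μ] g) (i : ι) :
    coordAvg μ i f =ᵐ[Measure.pi μ] coordAvg μ i g := by
  have := (measurePreserving_update μ i).quasiMeasurePreserving.ae_eq_comp hfg
  filter_upwards [Measure.ae_ae_of_ae_prod this] with z hz
  exact integral_congr_ae hz

theorem coordAvg_comm {i j : ι} (hij : i ≠ j) {f : (∀ k, α k) → ℝ}
    (hf : Integrable f (Measure.pi μ)) :
    coordAvg μ i (coordAvg μ j f) =ᵐ[Measure.pi μ] coordAvg μ j (coordAvg μ i f) := by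
  have hΦ : MeasurePreserving
      (fun p : (∀ k, α k) × (α i × α j) => update (update p.1 i p.2.1) j p.2.2)
      ((Measure.pi μ).prod ((μ i).prod (μ j))) (Measure.pi μ) :=
    (measurePreserving_update μ j).comp <|
      ((measurePreserving_update μ i).prod (.id (μ j))).comp
        (measurePreserving_prodAssoc _ _ _).symm
  filter_upwards [((hΦ.integrable_comp hf.aestronglyMeasurable).2 hf).prod_right_ae] with z hz
  simp only [MeasureTheory.coordAvg]
  rw [integral_integral_swap hz]
  simp_rw [update_comm hij]

theorem integral_mul_eq_zero_of_coordAvg_ae_eq_zero {i : ι} {f h : (∀ k, α k) → ℝ}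
    (hf : coordAvg μ i f =ᵐ[Measure.pi μ] 0) (hh : ∀ z t, h (update z i t) = h z)
    (hfh : Integrable (fun z => f z * h z) (Measure.pi μ)) :
    ∫ z, f z * h z ∂Measure.pi μ = 0 := by
  rw [← integral_coordAvg hfh i]
  refine integral_eq_zero_of_ae ?_
  filter_upwards [hf] with z hz
  rw [coordAvg_mul_of_update_eq μ i f hh, hz, Pi.zero_apply, zero_mul]

theorem coordAvg_coordAvg_ae_eq_zero {i j : ι} (hij : i ≠ j) {f : (∀ k, α k) → ℝ}
    (hf : Integrable f (Measure.pi μ)) (hf0 : coordAvg μ i f =ᵐ[Measure.pi μ] 0) :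
    coordAvg μ i (coordAvg μ j f) =ᵐ[Measure.pi μ] 0 :=
  calc coordAvg μ i (coordAvg μ j f)
      _ =ᵐ[Measure.pi μ] coordAvg μ j (coordAvg μ i f) := coordAvg_comm hij hf
      _ =ᵐ[Measure.pi μ] coordAvg μ j 0 := coordAvg_congr_ae hf0 j
      _ = 0 := by ext; simp [coordAvg]

theorem integral_mul_eq_integral_sub_coordAvg_mul_sub_coordAvg {i j : ι} (hij : i ≠ j)
    {f g : (∀ k, α k) → ℝ} (hfm : Measurable f) (hgm : Measurable g)
    (hf : Integrable f (Measure.pi μ)) (hg : Integrable g (Measure.pi μ))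
    (hfg : Integrable (fun z => f z * g z) (Measure.pi μ)) {β : ℝ}
    (hf_diff : ∀ z t, |f (update z j t) - f z| ≤ β) (hg_diff : ∀ z t, |g (update z i t) - g z| ≤ β)
    (hf0 : coordAvg μ i f =ᵐ[Measure.pi μ] 0) (hg0 : coordAvg μ j g =ᵐ[Measure.pi μ] 0) :
    ∫ z, f z * g z ∂Measure.pi μ
      = ∫ z, (f z - coordAvg μ j f z) * (g z - coordAvg μ i g z) ∂Measure.pi μ := by
  set k := coordAvg μ j f
  set h := coordAvg μ i g
  have hfk : ∀ z, ‖f z - k z‖ ≤ β := abs_sub_coordAvg_le μ hfm hf_diff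
  have hgh : ∀ z, ‖g z - h z‖ ≤ β := abs_sub_coordAvg_le μ hgm hg_diff
  have hfk_m : AEStronglyMeasurable (f - k) (Measure.pi μ) :=
    (hfm.sub (hfm.stronglyMeasurable.coordAvg μ j).measurable).aestronglyMeasurable
  have hgh_m : AEStronglyMeasurable (g - h) (Measure.pi μ) :=
    (hgm.sub (hgm.stronglyMeasurable.coordAvg μ i).measurable).aestronglyMeasurable
  have hfh : Integrable (fun z => f z * h z) (Measure.pi μ) :=
    (hfg.sub (hf.mul_bdd hgh_m (ae_of_all _ hgh))).congr
      (ae_of_all _ fun z => by simp only [Pi.sub_apply]; ring)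
  have hkg : Integrable (fun z => k z * g z) (Measure.pi μ) :=
    (hfg.sub (hg.bdd_mul hfk_m (ae_of_all _ hfk))).congr
      (ae_of_all _ fun z => by simp only [Pi.sub_apply]; ring)
  have hkh : Integrable (fun z => k z * h z) (Measure.pi μ) :=
    (hkg.sub ((hf.coordAvg j).mul_bdd hgh_m (ae_of_all _ hgh))).congr
      (ae_of_all _ fun z => by simp only [Pi.sub_apply]; ring)
  have hfh0 : ∫ z, f z * h z ∂Measure.pi μ = 0 :=
    integral_mul_eq_zero_of_coordAvg_ae_eq_zero hf0 (coordAvg_update μ i g) hfh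
  have hkg0 : ∫ z, k z * g z ∂Measure.pi μ = 0 := by
    simp_rw [mul_comm (k _)]
    exact integral_mul_eq_zero_of_coordAvg_ae_eq_zero hg0 (coordAvg_update μ j f)
      (hkg.congr (ae_of_all _ fun z => mul_comm _ _))
  have hkh0 : ∫ z, k z * h z ∂Measure.pi μ = 0 :=
    integral_mul_eq_zero_of_coordAvg_ae_eq_zero (coordAvg_coordAvg_ae_eq_zero hij hf hf0)
      (coordAvg_update μ i g) hkh
  have hfg_fh : Integrable (fun z => f z * g z - f z * h z) (Measure.pi μ) := hfg.sub hfh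
  have hfg_fh_kg : Integrable (fun z => f z * g z - f z * h z - k z * g z) (Measure.pi μ) :=
    hfg_fh.sub hkg
  have hexpand : ∀ z, (f z - k z) * (g z - h z) = f z * g z - f z * h z - k z * g z + k z * h z :=
    fun z => by ring
  simp_rw [hexpand]
  rw [integral_add hfg_fh_kg hkh, integral_sub hfg_fh hkg, integral_sub hfg hfh, hfh0, hkg0, hkh0]
  ring

theorem abs_integral_mul_le_sq {i j : ι} (hij : i ≠ j) {f g : (∀ k, α k) → ℝ}
    (hfm : Measurable f) (hgm : Measurable g) (hf : Integrable f (Measure.pi μ))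
    (hg : Integrable g (Measure.pi μ)) (hfg : Integrable (fun z => f z * g z) (Measure.pi μ))
    {β : ℝ} (hf_diff : ∀ z t, |f (update z j t) - f z| ≤ β)
    (hg_diff : ∀ z t, |g (update z i t) - g z| ≤ β)
    (hf0 : coordAvg μ i f =ᵐ[Measure.pi μ] 0) (hg0 : coordAvg μ j g =ᵐ[Measure.pi μ] 0) :
    |∫ z, f z * g z ∂Measure.pi μ| ≤ β ^ 2 := by
  have hbound : ∀ z, ‖(f z - coordAvg μ j f z) * (g z - coordAvg μ i g z)‖ ≤ β * β := fun z =>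
    have hfk := abs_sub_coordAvg_le μ hfm hf_diff z
    (abs_mul _ _).trans_le
      (mul_le_mul hfk (abs_sub_coordAvg_le μ hgm hg_diff z) (abs_nonneg _)
        ((abs_nonneg _).trans hfk))
  rw [integral_mul_eq_integral_sub_coordAvg_mul_sub_coordAvg hij hfm hgm hf hg hfg hf_diff hg_diff
    hf0 hg0, sq]
  simpa using norm_integral_le_of_norm_le_const (μ := Measure.pi μ) (ae_of_all _ hbound)

end ProductSpace

variable [Fintype ι] {μ : ∀ i, Measure (α i)} [∀ i, IsProbabilityMeasure (μ i)]
  {Ω : Type*} [MeasurableSpace Ω] {P : Measure Ω} [IsProbabilityMeasure P] {X : Ω → ∀ k, α k}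

theorem condExp_comp_ae_eq_coordAvg_comp (hX : Measurable X) (hlaw : P.map X = Measure.pi μ)
    (i : ι) {f : (∀ k, α k) → ℝ} (hfm : StronglyMeasurable f) (hf : Integrable f (Measure.pi μ)) :
    P[f ∘ X | MeasurableSpace.comap (fun ω (j : {j // j ≠ i}) => X ω j) inferInstance]
      =ᵐ[P] coordAvg μ i f ∘ X := by
  set restrict : (∀ k, α k) → ∀ j : {j // j ≠ i}, α j := fun z j => z j
  have hrestrict : Measurable restrict := measurable_pi_lambda _ fun j => measurable_pi_apply j.1
  have hR : Measurable (restrict ∘ X) := hrestrict.comp hX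
  have hcomp : ∀ {F : (∀ k, α k) → ℝ}, StronglyMeasurable F → Integrable F (Measure.pi μ) →
      Integrable (F ∘ X) P := fun hFm hF =>
    (integrable_map_measure (hlaw ▸ hFm.aestronglyMeasurable) hX.aemeasurable).1 (hlaw ▸ hF)
  obtain ⟨ψ, hψ, hAψ⟩ := (hfm.coordAvg μ i).exists_eq_comp_restrict_of_update_eq
    (coordAvg_update μ i f) (X (nonempty_of_isProbabilityMeasure P).some)
  refine (ae_eq_condExp_of_forall_setIntegral_eq hR.comap_le (hcomp hfm hf)
    (fun s _ _ => (hcomp (hfm.coordAvg μ i) (hf.coordAvg i)).integrableOn) ?_ ?_).symm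
  · rintro _ ⟨B, hB, rfl⟩ -
    have hrestrict_update : ∀ z t, restrict (update z i t) = restrict z := fun z t =>
      funext fun j => update_of_ne j.2 t z
    calc ∫ ω in X ⁻¹' (restrict ⁻¹' B), coordAvg μ i f (X ω) ∂P
        = ∫ z in restrict ⁻¹' B, coordAvg μ i f z ∂P.map X :=
          (setIntegral_map (hrestrict hB) (hlaw ▸ (hfm.coordAvg μ i).aestronglyMeasurable)
            hX.aemeasurable).symm
      _ = ∫ z in restrict ⁻¹' B, f z ∂P.map X := by
          rw [hlaw]
          exact setIntegral_coordAvg (hrestrict hB) (fun z t => by simp [hrestrict_update]) hf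
      _ = ∫ ω in X ⁻¹' (restrict ⁻¹' B), f (X ω) ∂P :=
          setIntegral_map (hrestrict hB) (hlaw ▸ hfm.aestronglyMeasurable) hX.aemeasurable
  · rw [hAψ]
    exact (hψ.comp_measurable (comap_measurable _)).aestronglyMeasurable

theorem coordAvg_ae_eq_zero_of_condExp_ae_eq_zero (hX : Measurable X)
    (hlaw : P.map X = Measure.pi μ) (i : ι) {f : (∀ k, α k) → ℝ} (hfm : StronglyMeasurable f)
    (hf : Integrable f (Measure.pi μ))
    (h0 : P[f ∘ X | MeasurableSpace.comap (fun ω (j : {j // j ≠ i}) => X ω j) inferInstance]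
      =ᵐ[P] 0) :
    coordAvg μ i f =ᵐ[Measure.pi μ] 0 := by
  rw [← hlaw]
  refine (ae_map_iff hX.aemeasurable
    (measurableSet_eq_fun (hfm.coordAvg μ i).measurable measurable_zero)).2 ?_
  exact (condExp_comp_ae_eq_coordAvg_comp hX hlaw i hfm hf).symm.trans h0

end MeasureTheory

open MeasureTheory ProbabilityTheory

theorem weak_correlation {Ω 𝒵 : Type*} [MeasurableSpace Ω] [MeasurableSpace 𝒵]
    (μ : Measure Ω) [IsProbabilityMeasure μ] (n : ℕ)
    (Z : Fin n → Ω → 𝒵) (hZ : ∀ i, Measurable (Z i))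
    (hindep : iIndepFun Z μ)
    (g : Fin n → (Fin n → 𝒵) → ℝ) (hg : ∀ i, Measurable (g i)) (β : ℝ)
    (hbd : ∀ (i j : Fin n), j ≠ i → ∀ (x x' : Fin n → 𝒵),
      (∀ k, k ≠ j → x k = x' k) → |g i x - g i x'| ≤ β)
    (hzero : ∀ i,
      (μ[(fun ω' => g i (fun j => Z j ω')) |
          MeasurableSpace.comap (fun ω' (j : {j : Fin n // j ≠ i}) => Z j ω')
            inferInstance]) =ᵐ[μ] 0)
    (hint : ∀ i, Integrable (fun ω => g i (fun j => Z j ω)) μ)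
    (hint2 : ∀ i j, Integrable
      (fun ω => g i (fun k => Z k ω) * g j (fun k => Z k ω)) μ) :
    ∀ i j : Fin n, i ≠ j →
      |∫ ω, g i (fun k => Z k ω) * g j (fun k => Z k ω) ∂μ| ≤ 4 * β ^ 2 := by
  intro i j hij
  set X : Ω → Fin n → 𝒵 := fun ω k => Z k ω
  have hX : Measurable X := measurable_pi_lambda _ hZ
  have : ∀ k, IsProbabilityMeasure (μ.map (Z k)) := fun k =>
    Measure.isProbabilityMeasure_map (hZ k).aemeasurable
  have hlaw : μ.map X = Measure.pi fun k => μ.map (Z k) :=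
    hindep.map_fun_eq_pi_map fun k => (hZ k).aemeasurable
  have hlift : ∀ {F : (Fin n → 𝒵) → ℝ}, Measurable F → Integrable (F ∘ X) μ →
      Integrable F (Measure.pi fun k => μ.map (Z k)) := fun hF hFX =>
    hlaw ▸ (integrable_map_measure hF.aestronglyMeasurable hX.aemeasurable).2 hFX
  have hcentered : ∀ k, coordAvg (fun k => μ.map (Z k)) k (g k) =ᵐ[_] 0 := fun k =>
    coordAvg_ae_eq_zero_of_condExp_ae_eq_zero hX hlaw k (hg k).stronglyMeasurable
      (hlift (hg k) (hint k)) (hzero k)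
  have hdiff : ∀ a b, b ≠ a → ∀ z t, |g a (update z b t) - g a z| ≤ β := fun a b hba z t =>
    hbd a b hba _ _ fun k hk => update_of_ne hk t z
  have hbound := abs_integral_mul_le_sq hij (hg i) (hg j) (hlift (hg i) (hint i))
    (hlift (hg j) (hint j)) (hlift ((hg i).mul (hg j)) (hint2 i j)) (hdiff i j hij.symm)
    (hdiff j i hij) (hcentered i) (hcentered j)
  rw [← hlaw, integral_map (f := fun z => g i z * g j z) hX.aemeasurable
    ((hg i).mul (hg j)).aestronglyMeasurable] at hbound
  nlinarith [sq_nonneg β]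
end

section
/- With g_i as defined from a γ-uniformly stable algorithm with loss bounded by L (g_i(Z) = E_{Z_i'}[E_Z ℓ(A_{S^i}, Z) − ℓ(A_{S^i}, Z_i)]), each g_i satisfies: |g_i| ≤ L almost surely, E[g_i | Z_{[n]∖{i}}] = 0 almost surely, and as a deterministic function g_i satisfies the bounded differences property with constant 2γ in all coordinates except the i-th. -/
/-!
Write `φ z' w` for the loss at `w` of the algorithm trained on `s` with its `i`-th point
replaced by `z'`, so that `g i s = ∫ z', (∫ w, φ z' w) - φ z' (s i)`. Both terms lie in
`[0, L]`, which gives `|g i s| ≤ L`. Integrating over the `i`-th coordinate `t` and swapping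
the two integrals (Fubini, the integrand is bounded) leaves `∫ z', (∫ φ z') - (∫ φ z') = 0`.
Changing the `j`-th coordinate of `s` with `j ≠ i` leaves `s i` alone and, by uniform stability,
moves `φ` by at most `γ` pointwise, hence each of the two terms by at most `γ`.
-/

open MeasureTheory

lemma Function.update_eq_update_update_of_eq_off {ι α : Type*} [DecidableEq ι]
    {s s' : ι → α} {i j : ι} (hji : j ≠ i) (h : ∀ k, k ≠ j → s k = s' k) (z : α) :
    Function.update s' i z = Function.update (Function.update s i z) j (s' j) := by
  funext k
  by_cases hkj : k = j
  · subst hkj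
    simp [Function.update_of_ne hji]
  · by_cases hki : k = i
    · subst hki
      simp [Function.update_of_ne hkj]
    · simp [Function.update_of_ne hkj, Function.update_of_ne hki, h k hkj]

section

variable {α β : Type*} [MeasurableSpace α] [MeasurableSpace β] {μ : Measure α} {ν : Measure β}
  {f f' : α → β → ℝ} {C : ℝ}

lemma abs_integral_le_of_forall_abs_le [IsProbabilityMeasure μ] {u : α → ℝ}
    (h : ∀ a, |u a| ≤ C) : |∫ a, u a ∂μ| ≤ C := by
  simpa using norm_integral_le_of_norm_le_const (μ := μ) (f := u) (ae_of_all _ h)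

lemma integrable_apply_of_measurable_uncurry [IsFiniteMeasure ν]
    (hf : Measurable (Function.uncurry f)) (hC : ∀ a b, |f a b| ≤ C) (a : α) : Integrable (f a) ν :=
  .of_bound (hf.comp measurable_prodMk_left).aestronglyMeasurable C (ae_of_all _ (hC a))

variable [IsProbabilityMeasure ν]

lemma integrable_integral_sub_apply [IsFiniteMeasure μ] (hf : Measurable (Function.uncurry f))
    (hC : ∀ a b, |f a b| ≤ C) (x : β) :
    Integrable (fun a => (∫ b, f a b ∂ν) - f a x) μ := by
  refine .of_bound ((hf.stronglyMeasurable.integral_prod_right' (ν := ν)).sub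
    (hf.comp (measurable_id.prodMk measurable_const)).stronglyMeasurable).aestronglyMeasurable
    (C + C) (ae_of_all _ fun a => ?_)
  exact (abs_sub _ _).trans (add_le_add (abs_integral_le_of_forall_abs_le (hC a)) (hC a x))

lemma abs_integral_integral_sub_le [IsProbabilityMeasure μ] {L : ℝ}
    (hf0 : ∀ a b, 0 ≤ f a b) (hfL : ∀ a b, f a b ≤ L) (x : β) :
    |∫ a, ((∫ b, f a b ∂ν) - f a x) ∂μ| ≤ L := by
  refine abs_integral_le_of_forall_abs_le fun a =>
    abs_sub_le_of_nonneg_of_le (integral_nonneg (hf0 a)) ?_ (hf0 a x) (hfL a x)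
  exact (le_abs_self _).trans (abs_integral_le_of_forall_abs_le fun b =>
    (abs_of_nonneg (hf0 a b)).trans_le (hfL a b))

lemma integral_integral_integral_sub_eq_zero [IsProbabilityMeasure μ]
    (hf : Measurable (Function.uncurry f)) (hC : ∀ a b, |f a b| ≤ C) :
    ∫ t, ∫ a, ((∫ b, f a b ∂ν) - f a t) ∂μ ∂ν = 0 := by
  have hint : Integrable (Function.uncurry fun t a => (∫ b, f a b ∂ν) - f a t) (ν.prod μ) := by
    refine .of_bound ((hf.stronglyMeasurable.integral_prod_right' (ν := ν)).comp_measurable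
      measurable_snd |>.sub (hf.comp measurable_swap).stronglyMeasurable).aestronglyMeasurable
      (C + C) (ae_of_all _ fun p => ?_)
    exact (abs_sub _ _).trans
      (add_le_add (abs_integral_le_of_forall_abs_le (hC p.2)) (hC p.2 p.1))
  have hmean : ∀ a, ∫ t, ((∫ b, f a b ∂ν) - f a t) ∂ν = 0 := fun a => by
    rw [integral_sub (integrable_const _) (integrable_apply_of_measurable_uncurry hf hC a),
      integral_const]
    simp
  rw [integral_integral_swap hint]
  simp [hmean]

lemma abs_sub_integral_integral_sub_le [IsProbabilityMeasure μ]
    (hf : Measurable (Function.uncurry f)) (hf' : Measurable (Function.uncurry f'))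
    (hC : ∀ a b, |f a b| ≤ C) (hC' : ∀ a b, |f' a b| ≤ C) {γ : ℝ}
    (hγ : ∀ a b, |f a b - f' a b| ≤ γ) (x : β) :
    |∫ a, ((∫ b, f a b ∂ν) - f a x) ∂μ - ∫ a, ((∫ b, f' a b ∂ν) - f' a x) ∂μ| ≤ 2 * γ := by
  rw [← integral_sub (integrable_integral_sub_apply hf hC x)
    (integrable_integral_sub_apply hf' hC' x)]
  refine abs_integral_le_of_forall_abs_le fun a => ?_
  have hmean : |(∫ b, f a b ∂ν) - ∫ b, f' a b ∂ν| ≤ γ := by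
    rw [← integral_sub (integrable_apply_of_measurable_uncurry hf hC a)
      (integrable_apply_of_measurable_uncurry hf' hC' a)]
    exact abs_integral_le_of_forall_abs_le (hγ a)
  calc |(∫ b, f a b ∂ν) - f a x - ((∫ b, f' a b ∂ν) - f' a x)|
      = |((∫ b, f a b ∂ν) - ∫ b, f' a b ∂ν) - (f a x - f' a x)| := by ring_nf
    _ ≤ γ + γ := (abs_sub _ _).trans (add_le_add hmean (hγ a x))
    _ = 2 * γ := by ring

end

theorem g_properties_general {𝒵 H : Type*} [MeasurableSpace 𝒵]
    (n : ℕ) (D : Measure 𝒵) [IsProbabilityMeasure D]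
    (A : (Fin n → 𝒵) → H) (l : H → 𝒵 → ℝ)
    (hmeas : Measurable (fun p : (Fin n → 𝒵) × 𝒵 => l (A p.1) p.2))
    (γ L : ℝ) (hl0 : ∀ h z, 0 ≤ l h z) (hlL : ∀ h z, l h z ≤ L)
    (hstab : ∀ (s : Fin n → 𝒵) (i : Fin n) (z' w : 𝒵),
      |l (A s) w - l (A (Function.update s i z')) w| ≤ γ)
    (g : Fin n → (Fin n → 𝒵) → ℝ)
    (hgdef : ∀ (i : Fin n) (s : Fin n → 𝒵),
      g i s = ∫ z', ((∫ w, l (A (Function.update s i z')) w ∂D) -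
        l (A (Function.update s i z')) (s i)) ∂D) :
    (∀ (i : Fin n) (s : Fin n → 𝒵), |g i s| ≤ L) ∧
    (∀ (i : Fin n) (s : Fin n → 𝒵),
      ∫ t, g i (Function.update s i t) ∂D = 0) ∧
    (∀ (i j : Fin n), j ≠ i → ∀ (s s' : Fin n → 𝒵),
      (∀ k, k ≠ j → s k = s' k) → |g i s - g i s'| ≤ 2 * γ) := by
  have hφ : ∀ i s, Measurable (Function.uncurry fun z' w => l (A (Function.update s i z')) w) :=
    fun i s => hmeas.comp ((measurable_update s).prodMap measurable_id)
  have habs : ∀ h z, |l h z| ≤ L := fun h z => (abs_of_nonneg (hl0 h z)).trans_le (hlL h z)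
  refine ⟨fun i s => ?_, fun i s => ?_, fun i j hji s s' hss' => ?_⟩
  · rw [hgdef]
    exact abs_integral_integral_sub_le (fun _ _ => hl0 _ _) (fun _ _ => hlL _ _) _
  · have hgt : ∀ t, g i (Function.update s i t) =
        ∫ z', ((∫ w, l (A (Function.update s i z')) w ∂D) - l (A (Function.update s i z')) t) ∂D :=
      fun t => by simp only [hgdef, Function.update_idem, Function.update_self]
    simp only [hgt]
    exact integral_integral_integral_sub_eq_zero (hφ i s) (fun _ _ => habs _ _)
  · rw [hgdef, hgdef, ← hss' i hji.symm]
    refine abs_sub_integral_integral_sub_le (hφ i s) (hφ i s') (fun _ _ => habs _ _)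
      (fun _ _ => habs _ _) (fun z' w => ?_) _
    rw [Function.update_eq_update_update_of_eq_off hji hss']
    exact hstab _ j _ w

theorem g_properties {𝒵 H : Type*} [MeasurableSpace 𝒵]
    (n : ℕ) (hn : 0 < n) (D : Measure 𝒵) [IsProbabilityMeasure D]
    (A : (Fin n → 𝒵) → H) (l : H → 𝒵 → ℝ)
    (hmeas : Measurable (fun p : (Fin n → 𝒵) × 𝒵 => l (A p.1) p.2))
    (γ L : ℝ) (hl0 : ∀ h z, 0 ≤ l h z) (hlL : ∀ h z, l h z ≤ L)
    (hstab : ∀ (s : Fin n → 𝒵) (i : Fin n) (z' w : 𝒵),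
      |l (A s) w - l (A (Function.update s i z')) w| ≤ γ)
    (g : Fin n → (Fin n → 𝒵) → ℝ)
    (hgdef : ∀ (i : Fin n) (s : Fin n → 𝒵),
      g i s = ∫ z', ((∫ w, l (A (Function.update s i z')) w ∂D) -
        l (A (Function.update s i z')) (s i)) ∂D) :
    (∀ (i : Fin n) (s : Fin n → 𝒵), |g i s| ≤ L) ∧
    (∀ (i : Fin n) (s : Fin n → 𝒵),
      ∫ t, g i (Function.update s i t) ∂D = 0) ∧
    (∀ (i j : Fin n), j ≠ i → ∀ (s s' : Fin n → 𝒵),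
      (∀ k, k ≠ j → s k = s' k) → |g i s - g i s'| ≤ 2 * γ) :=
  g_properties_general n D A l hmeas γ L hl0 hlL hstab g hgdef
end

section
/- Let a_1 ≥ a_2 ≥ … ≥ a_n ≥ 0 and let ε_1,…,ε_n be i.i.d. Rademacher signs. Then for every p ≥ 2 there exist universal constants c, C > 0 with c·(∑_{i=1}^{min(p,n)} a_i + √p·(∑_{i=p+1}^n a_i²)^{1/2}) ≤ ‖∑_{i=1}^n a_i ε_i‖_p ≤ C·(∑_{i=1}^{min(p,n)} a_i + √p·(∑_{i=p+1}^n a_i²)^{1/2}). -/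
/-!
Realise the signs on the uniform cube `ι → Bool`: independence and the common law of the `εᵢ`
turn `∫ F(ε) dμ` into the average of `F` over the cube, so all estimates concern finite
averages. Write `X = ∑ bᵢ εᵢ` and `σ² = ∑ bᵢ²`.

Upper bound. The first `p` terms are bounded pointwise by their coefficient sum. The tail is
subgaussian, `𝔼 cosh(λX) = ∏ cosh(λbᵢ) ≤ exp(λ²σ²/2)`, and `|x|ᵖ ≤ 2 (p/λ)ᵖ e⁻ᵖ cosh(λx)`
with `λ = √p/σ` gives `𝔼|X|ᵖ ≤ 2 (√p σ)ᵖ`.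

Lower bound. Flipping the signs outside a set `A` preserves the uniform measure, fixes the
`A`-part of `X` and negates the rest, so by convexity dropping terms can only lower `𝔼|X|ᵖ`.
The first `min(p, n)` signs are all `+1` with probability at least `2⁻ᵖ`, which gives the head.
For the tail, if every coefficient satisfies `p bᵢ² ≤ σ²` then `cosh x ≥ exp(x²/2 - x⁴/4)`
bounds the moment generating function from below at `λ = √p/σ` as well, and a Paley–Zygmund
argument for `exp(λX)` gives `P(X ≥ √p σ/8) ≥ e⁻²ᵖ/25`. Otherwise a single tail coefficient
`aᵢ` (with `i ≥ p`) has `√p σ ≤ p aᵢ ≤ a₀ + ⋯ + a_{p-1}`, and the head already dominates.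
-/

open MeasureTheory ProbabilityTheory Real Finset
open scoped ENNReal BigOperators

namespace Rademacher

lemma one_add_sq_div_two_le_cosh (x : ℝ) : 1 + x ^ 2 / 2 ≤ cosh x := by
  have h := sum_le_hasSum (range 2)
    (fun n _ => div_nonneg ((even_two_mul n).pow_nonneg x) (Nat.cast_nonneg _)) (hasSum_cosh x)
  simpa [sum_range_succ] using h

lemma exp_sq_div_two_sub_le_cosh (x : ℝ) : exp (x ^ 2 / 2 - x ^ 4 / 4) ≤ cosh x := by
  set u := x ^ 2 / 2 with hu
  have hu0 : 0 ≤ u := by positivity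
  have hlog : u - u ^ 2 ≤ log (1 + u) := by
    refine le_trans ?_ (one_sub_inv_le_log_of_pos (by positivity))
    rw [← one_div, one_sub_div (by positivity), add_sub_cancel_left, le_div_iff₀ (by positivity)]
    nlinarith [pow_nonneg hu0 3]
  calc exp (x ^ 2 / 2 - x ^ 4 / 4) = exp (u - u ^ 2) := by rw [hu]; ring_nf
    _ ≤ 1 + u := (exp_le_exp.2 hlog).trans_eq (exp_log (by positivity))
    _ ≤ cosh x := one_add_sq_div_two_le_cosh x

lemma pow_le_pow_mul_exp_sub {t : ℝ} (ht : 0 ≤ t) {p : ℕ} (hp : p ≠ 0) :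
    t ^ p ≤ p ^ p * exp (t - p) := by
  have hp' : (0 : ℝ) < p := by positivity
  have h : (t / p) ^ p ≤ exp (t / p - 1) ^ p :=
    pow_le_pow_left₀ (by positivity) (by linarith [add_one_le_exp (t / p - 1)]) p
  rw [← exp_nat_mul, mul_sub, mul_div_cancel₀ _ hp'.ne', mul_one, div_pow,
    div_le_iff₀ (by positivity)] at h
  linarith

lemma abs_pow_le_mul_cosh (x : ℝ) {l : ℝ} (hl : 0 < l) {p : ℕ} (hp : p ≠ 0) :
    |x| ^ p ≤ 2 * (p / l) ^ p * exp (-p) * cosh (l * x) := by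
  have hexp : exp (l * |x|) ≤ 2 * cosh (l * x) := by
    rw [← cosh_abs, abs_mul, abs_of_pos hl, cosh_eq]
    linarith [exp_pos (-(l * |x|))]
  have h := pow_le_pow_mul_exp_sub (by positivity : 0 ≤ l * |x|) hp
  rw [mul_pow, sub_eq_add_neg, exp_add] at h
  calc |x| ^ p = (l ^ p * |x| ^ p) / l ^ p := by field_simp
    _ ≤ p ^ p * (exp (l * |x|) * exp (-p)) / l ^ p := by gcongr
    _ ≤ p ^ p * (2 * cosh (l * x) * exp (-p)) / l ^ p := by gcongr
    _ = 2 * (p / l) ^ p * exp (-p) * cosh (l * x) := by rw [div_pow]; ring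

lemma abs_pow_le_midpoint (u v : ℝ) (p : ℕ) : |u| ^ p ≤ (|u + v| ^ p + |u - v| ^ p) / 2 := by
  have hu : |u| ≤ (1 / 2 : ℝ) * |u + v| + (1 / 2 : ℝ) * |u - v| := by
    have := abs_add_le (u + v) (u - v)
    rw [show u + v + (u - v) = 2 * u by ring, abs_mul, abs_two] at this
    linarith
  have hconv := (convexOn_pow p).2 (Set.mem_Ici.2 (abs_nonneg (u + v)))
    (Set.mem_Ici.2 (abs_nonneg (u - v))) (by norm_num : (0 : ℝ) ≤ 1 / 2)
    (by norm_num : (0 : ℝ) ≤ 1 / 2) (by norm_num)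
  simp only [smul_eq_mul] at hconv
  calc |u| ^ p ≤ ((1 / 2 : ℝ) * |u + v| + (1 / 2 : ℝ) * |u - v|) ^ p := by gcongr
    _ ≤ _ := hconv
    _ = _ := by ring

lemma sq_expect_exp_sub_le {κ : Type*} [Fintype κ] [Nonempty κ] (X : κ → ℝ) {l τ : ℝ}
    (hl : 0 ≤ l) (h : exp (l * τ) ≤ 𝔼 k, exp (l * X k)) :
    (𝔼 k, exp (l * X k) - exp (l * τ)) ^ 2 ≤
      (𝔼 k, exp (2 * l * X k)) * 𝔼 k, if τ ≤ X k then (1 : ℝ) else 0 := by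
  have hsplit : 𝔼 k, exp (l * X k) - exp (l * τ) ≤
      𝔼 k, exp (l * X k) * if τ ≤ X k then (1 : ℝ) else 0 := by
    have : 𝔼 k, exp (l * X k) ≤
        𝔼 k, (exp (l * τ) + exp (l * X k) * if τ ≤ X k then (1 : ℝ) else 0) :=
      expect_le_expect fun k _ => by
        split_ifs with hk
        · linarith [exp_pos (l * τ)]
        · simpa using exp_le_exp.2 (mul_le_mul_of_nonneg_left (not_le.1 hk).le hl)
    rw [expect_add_distrib, Fintype.expect_const] at this
    linarith
  calc (𝔼 k, exp (l * X k) - exp (l * τ)) ^ 2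
      ≤ (𝔼 k, exp (l * X k) * if τ ≤ X k then (1 : ℝ) else 0) ^ 2 :=
        pow_le_pow_left₀ (sub_nonneg.2 h) hsplit 2
    _ ≤ (𝔼 k, exp (l * X k) ^ 2) * 𝔼 k, (if τ ≤ X k then (1 : ℝ) else 0) ^ 2 :=
        expect_mul_sq_le_sq_mul_sq _ _ _
    _ = (𝔼 k, exp (2 * l * X k)) * 𝔼 k, if τ ≤ X k then (1 : ℝ) else 0 := by
        congr 1
        · refine expect_congr rfl fun k _ => ?_
          rw [← exp_nat_mul]; ring_nf
        · refine expect_congr rfl fun k _ => ?_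
          split_ifs <;> simp

lemma expect_bool (g : Bool → ℝ) : 𝔼 b, g b = (g true + g false) / 2 := by
  rw [Fintype.expect_eq_sum_div_card]
  simp

noncomputable def boolSign (b : Bool) : ℝ := if b then 1 else -1

lemma abs_boolSign (b : Bool) : |boolSign b| = 1 := by cases b <;> simp [boolSign]

noncomputable def rademacherSum {ι : Type*} (A : Finset ι) (b : ι → ℝ) (s : ι → Bool) : ℝ :=
  ∑ i ∈ A, b i * boolSign (s i)

lemma abs_rademacherSum_le {ι : Type*} (A : Finset ι) (b : ι → ℝ) (s : ι → Bool) :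
    |rademacherSum A b s| ≤ ∑ i ∈ A, |b i| :=
  (abs_sum_le_sum_abs _ _).trans_eq <| sum_congr rfl fun i _ => by
    rw [abs_mul, abs_boolSign, mul_one]

section Cube

variable {ι : Type*} [Fintype ι] [DecidableEq ι]

lemma expect_prod_apply {κ : ι → Type*} [∀ i, Fintype (κ i)] (f : ∀ i, κ i → ℝ) :
    𝔼 x : (∀ i, κ i), ∏ i, f i (x i) = ∏ i, 𝔼 y, f i y := by
  simp only [Fintype.expect_eq_sum_div_card, ← Fintype.prod_sum, Fintype.card_pi, Nat.cast_prod,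
    Finset.prod_div_distrib]

lemma expect_exp_mul_rademacherSum (A : Finset ι) (b : ι → ℝ) (t : ℝ) :
    𝔼 s, exp (t * rademacherSum A b s) = ∏ i ∈ A, cosh (t * b i) := by
  have hprod (s : ι → Bool) : exp (t * rademacherSum A b s) =
      ∏ i, if i ∈ A then exp (t * b i * boolSign (s i)) else 1 := by
    rw [Fintype.prod_ite_mem, rademacherSum, mul_sum, exp_sum]
    simp only [mul_assoc]
  simp_rw [hprod]
  rw [expect_prod_apply (fun i y => if i ∈ A then exp (t * b i * boolSign y) else 1),
    ← Fintype.prod_ite_mem A]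
  refine prod_congr rfl fun i _ => ?_
  split_ifs
  · rw [expect_bool]; simp [boolSign, cosh_eq]
  · simp

lemma expect_exp_mul_rademacherSum_le (A : Finset ι) (b : ι → ℝ) (t : ℝ) :
    𝔼 s, exp (t * rademacherSum A b s) ≤ exp (t ^ 2 * (∑ i ∈ A, b i ^ 2) / 2) := by
  rw [expect_exp_mul_rademacherSum, mul_sum, sum_div, exp_sum]
  exact prod_le_prod (fun i _ => (cosh_pos _).le)
    fun i _ => (cosh_le_exp_half_sq _).trans_eq (by ring_nf)

lemma exp_le_expect_exp_mul_rademacherSum (A : Finset ι) (b : ι → ℝ) (t : ℝ) :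
    exp (t ^ 2 * (∑ i ∈ A, b i ^ 2) / 2 - t ^ 4 * (∑ i ∈ A, b i ^ 4) / 4) ≤
      𝔼 s, exp (t * rademacherSum A b s) := by
  rw [expect_exp_mul_rademacherSum, mul_sum, mul_sum, sum_div, sum_div, ← sum_sub_distrib,
    exp_sum]
  exact prod_le_prod (fun i _ => (exp_pos _).le)
    fun i _ => (exp_sq_div_two_sub_le_cosh _).trans_eq' (by ring_nf)

lemma expect_cosh_mul_rademacherSum_le (A : Finset ι) (b : ι → ℝ) (t : ℝ) :
    𝔼 s, cosh (t * rademacherSum A b s) ≤ exp (t ^ 2 * (∑ i ∈ A, b i ^ 2) / 2) := by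
  have h := add_le_add (expect_exp_mul_rademacherSum_le A b t)
    (expect_exp_mul_rademacherSum_le A b (-t))
  simp only [cosh_eq, ← expect_div, expect_add_distrib, neg_mul, neg_sq] at h ⊢
  linarith

lemma expect_abs_rademacherSum_pow_le (A : Finset ι) (b : ι → ℝ) {p : ℕ} (hp : p ≠ 0) :
    𝔼 s, |rademacherSum A b s| ^ p ≤ 2 * (√p * √(∑ i ∈ A, b i ^ 2)) ^ p := by
  rcases (sum_nonneg fun i _ => sq_nonneg (b i) : 0 ≤ ∑ i ∈ A, b i ^ 2).eq_or_lt with h0 | hpos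
  · have hb : ∀ i ∈ A, b i = 0 := fun i hi => by
      simpa using (sum_eq_zero_iff_of_nonneg fun i _ => sq_nonneg (b i)).1 h0.symm i hi
    have hzero (s : ι → Bool) : rademacherSum A b s = 0 :=
      sum_eq_zero fun i hi => by rw [hb i hi, zero_mul]
    simp only [hzero, abs_zero, zero_pow hp, expect_const_zero]
    positivity
  set σ := √(∑ i ∈ A, b i ^ 2)
  have hσ : 0 < σ := sqrt_pos.2 hpos
  have hp' : (0 : ℝ) < p := by positivity
  have hl : 0 < √p / σ := by positivity
  have hlσ : (√p / σ) ^ 2 * (∑ i ∈ A, b i ^ 2) = p := by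
    rw [div_pow, sq_sqrt hp'.le, sq_sqrt hpos.le, div_mul_cancel₀ _ hpos.ne']
  have hpl : p / (√p / σ) = √p * σ := by
    rw [div_div_eq_mul_div, div_eq_iff (sqrt_pos.2 hp').ne']
    linear_combination (-σ) * mul_self_sqrt hp'.le
  calc 𝔼 s, |rademacherSum A b s| ^ p
      ≤ 𝔼 s, 2 * (p / (√p / σ)) ^ p * exp (-p) * cosh (√p / σ * rademacherSum A b s) :=
        expect_le_expect fun s _ => abs_pow_le_mul_cosh _ hl hp
    _ = 2 * (√p * σ) ^ p * exp (-p) * 𝔼 s, cosh (√p / σ * rademacherSum A b s) := by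
        rw [mul_expect, hpl]
    _ ≤ 2 * (√p * σ) ^ p * exp (-p) * exp (p / 2) := by
        gcongr
        exact (expect_cosh_mul_rademacherSum_le A b _).trans_eq (by rw [hlσ])
    _ ≤ 2 * (√p * σ) ^ p := by
        rw [mul_assoc, ← exp_add]
        exact mul_le_of_le_one_right (by positivity) (exp_le_one_iff.2 (by linarith))

lemma expect_abs_rademacherSum_pow_le_of_split (A : Finset ι) (b : ι → ℝ) {p : ℕ}
    (hp : p ≠ 0) :
    𝔼 s, |rademacherSum univ b s| ^ p ≤
      (2 * (∑ i ∈ A, |b i| + √p * √(∑ i ∈ Aᶜ, b i ^ 2))) ^ p := by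
  set H := ∑ i ∈ A, |b i|
  set τ := √p * √(∑ i ∈ Aᶜ, b i ^ 2)
  have hH : 0 ≤ H := sum_nonneg fun i _ => abs_nonneg _
  have hτ : 0 ≤ τ := by positivity
  calc 𝔼 s, |rademacherSum univ b s| ^ p
      ≤ 𝔼 s, 2 ^ (p - 1) * (H ^ p + |rademacherSum Aᶜ b s| ^ p) :=
        expect_le_expect fun s _ => by
          rw [show rademacherSum univ b s = rademacherSum A b s + rademacherSum Aᶜ b s from
            (sum_add_sum_compl A _).symm]
          calc _ ≤ (H + |rademacherSum Aᶜ b s|) ^ p := by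
                gcongr
                exact (abs_add_le _ _).trans (add_le_add_left (abs_rademacherSum_le A b s) _)
            _ ≤ _ := add_pow_le hH (abs_nonneg _) p
    _ = 2 ^ (p - 1) * (H ^ p + 𝔼 s, |rademacherSum Aᶜ b s| ^ p) := by
        rw [← mul_expect, expect_add_distrib, Fintype.expect_const]
    _ ≤ 2 ^ (p - 1) * (2 * (H + τ) ^ p) := by
        have htail : 𝔼 s, |rademacherSum Aᶜ b s| ^ p ≤ 2 * τ ^ p :=
          expect_abs_rademacherSum_pow_le Aᶜ b hp
        have := pow_add_pow_le hH hτ hp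
        have := pow_nonneg hH p
        gcongr
        linarith
    _ = (2 * (H + τ)) ^ p := by rw [mul_pow, ← mul_assoc, pow_sub_one_mul hp]

lemma expect_abs_rademacherSum_pow_mono {A B : Finset ι} (hAB : A ⊆ B) (b : ι → ℝ) (p : ℕ) :
    𝔼 s, |rademacherSum A b s| ^ p ≤ 𝔼 s, |rademacherSum B b s| ^ p := by
  let flip : (ι → Bool) → (ι → Bool) := fun s i => if i ∈ A then s i else !s i
  have hflip : Function.Involutive flip := fun s => funext fun i => by
    by_cases hi : i ∈ A <;> simp [flip, hi]
  have hsplit (s : ι → Bool) :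
      rademacherSum B b s = rademacherSum A b s + rademacherSum (B \ A) b s := by
    rw [rademacherSum, ← sum_sdiff hAB, add_comm]; rfl
  have hA (s : ι → Bool) : rademacherSum A b (flip s) = rademacherSum A b s :=
    sum_congr rfl fun i hi => by simp [flip, hi]
  have hBA (s : ι → Bool) : rademacherSum (B \ A) b (flip s) = -rademacherSum (B \ A) b s := by
    rw [rademacherSum, rademacherSum, ← sum_neg_distrib]
    refine sum_congr rfl fun i hi => ?_
    cases h : s i <;> simp [flip, (mem_sdiff.1 hi).2, h, boolSign]
  have hsym : 𝔼 s, |rademacherSum A b s - rademacherSum (B \ A) b s| ^ p =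
      𝔼 s, |rademacherSum B b s| ^ p :=
    Fintype.expect_equiv hflip.toPerm _ _ fun s => by
      simp [hsplit, hA, hBA, sub_eq_add_neg]
  calc 𝔼 s, |rademacherSum A b s| ^ p
      ≤ 𝔼 s, (|rademacherSum B b s| ^ p +
          |rademacherSum A b s - rademacherSum (B \ A) b s| ^ p) / 2 :=
        expect_le_expect fun s _ => by rw [hsplit]; exact abs_pow_le_midpoint _ _ p
    _ = 𝔼 s, |rademacherSum B b s| ^ p := by
        rw [← expect_div, expect_add_distrib, hsym]; ring

lemma pow_sum_le_expect_abs_rademacherSum_pow (A : Finset ι) {b : ι → ℝ}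
    (hb : ∀ i ∈ A, 0 ≤ b i) (p : ℕ) :
    (2 : ℝ)⁻¹ ^ #A * (∑ i ∈ A, b i) ^ p ≤ 𝔼 s, |rademacherSum A b s| ^ p := by
  let allTrue : (ι → Bool) → ℝ := fun s => ∏ i, if i ∈ A then (if s i then 1 else 0) else 1
  have hprob : 𝔼 s, allTrue s = (2 : ℝ)⁻¹ ^ #A := by
    rw [expect_prod_apply (fun i y => if i ∈ A then (if y = true then (1 : ℝ) else 0) else 1),
      ← prod_const, ← Fintype.prod_ite_mem A]
    refine prod_congr rfl fun i _ => ?_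
    split_ifs <;> simp
  rw [← hprob, expect_mul]
  refine expect_le_expect fun s _ => ?_
  by_cases h : ∀ i ∈ A, s i = true
  · have hsum : rademacherSum A b s = ∑ i ∈ A, b i :=
      sum_congr rfl fun i hi => by simp [h i hi, boolSign]
    have hone : allTrue s = 1 := prod_eq_one fun i _ => by split_ifs <;> simp_all
    rw [hone, one_mul, hsum, abs_of_nonneg (sum_nonneg hb)]
  · obtain ⟨i, hi, hs⟩ := not_forall₂.1 h
    have hzero : allTrue s = 0 := prod_eq_zero (mem_univ i) (by simp [hi, hs])
    rw [hzero, zero_mul]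
    positivity

lemma exp_div_four_le_expect_exp_mul_rademacherSum {A : Finset ι} {b : ι → ℝ} {p : ℕ}
    (hpos : 0 < ∑ i ∈ A, b i ^ 2) (hsmall : ∀ i ∈ A, p * b i ^ 2 ≤ ∑ j ∈ A, b j ^ 2) :
    exp (p / 4) ≤ 𝔼 s, exp (√p / √(∑ i ∈ A, b i ^ 2) * rademacherSum A b s) := by
  set S := ∑ i ∈ A, b i ^ 2
  have hl2 : (√p / √S) ^ 2 * S = p := by
    rw [div_pow, sq_sqrt (by positivity), sq_sqrt hpos.le, div_mul_cancel₀ _ hpos.ne']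
  have hfourth : (√p / √S) ^ 4 * ∑ i ∈ A, b i ^ 4 ≤ p := by
    rcases (Nat.cast_nonneg p : (0 : ℝ) ≤ p).eq_or_lt with hp0 | hp0
    · rw [← hp0, sqrt_zero, zero_div]; simp
    have hb4 : ∑ i ∈ A, b i ^ 4 ≤ S * (S / p) := by
      rw [sum_mul]
      gcongr with i hi
      rw [← mul_div_assoc, le_div_iff₀ hp0]
      nlinarith [hsmall i hi, sq_nonneg (b i)]
    calc (√p / √S) ^ 4 * ∑ i ∈ A, b i ^ 4 ≤ (√p / √S) ^ 4 * (S * (S / p)) := by gcongr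
      _ = ((√p / √S) ^ 2 * S) ^ 2 / p := by ring
      _ = p := by rw [hl2]; field_simp
  exact (exp_le_exp.2 (by linarith)).trans (exp_le_expect_exp_mul_rademacherSum A b _)

lemma le_expect_ite_le_rademacherSum {A : Finset ι} {b : ι → ℝ} {p : ℕ} (hp : 2 ≤ p)
    (hpos : 0 < ∑ i ∈ A, b i ^ 2) (hsmall : ∀ i ∈ A, p * b i ^ 2 ≤ ∑ j ∈ A, b j ^ 2) :
    exp (-(2 * p)) / 25 ≤
      𝔼 s, if √p * √(∑ i ∈ A, b i ^ 2) / 8 ≤ rademacherSum A b s then (1 : ℝ) else 0 := by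
  set S := ∑ i ∈ A, b i ^ 2
  set P := 𝔼 s, if √p * √S / 8 ≤ rademacherSum A b s then (1 : ℝ) else 0
  have hp' : (2 : ℝ) ≤ p := by exact_mod_cast hp
  have hl : 0 < √p / √S := by positivity
  have hlτ : √p / √S * (√p * √S / 8) = p / 8 := by
    field_simp
    rw [sq_sqrt (by positivity)]
  have hM1 := exp_div_four_le_expect_exp_mul_rademacherSum hpos hsmall
  have hM2 : 𝔼 s, exp (2 * (√p / √S) * rademacherSum A b s) ≤ exp (2 * p) := by
    refine (expect_exp_mul_rademacherSum_le A b _).trans_eq (congrArg exp ?_)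
    rw [mul_pow, div_pow, sq_sqrt (by positivity), sq_sqrt hpos.le]
    field_simp
    ring
  have hthreshold : exp (p / 8) ≤ 4 / 5 * exp (p / 4) := by
    have h54 : 5 / 4 ≤ exp (1 / 4) := by linarith [add_one_le_exp (1 / 4)]
    have : exp (p / 8) * exp (1 / 4) ≤ exp (p / 4) := by
      rw [← exp_add]; exact exp_le_exp.2 (by linarith)
    nlinarith [exp_pos (p / 8)]
  have hPZ := sq_expect_exp_sub_le (rademacherSum A b) hl.le (τ := √p * √S / 8)
    (by rw [hlτ]; linarith [exp_pos (p / 4)])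
  rw [hlτ] at hPZ
  have hmain : exp (p / 2) / 25 ≤ exp (2 * p) * P :=
    calc exp (p / 2) / 25 = (exp (p / 4) / 5) ^ 2 := by
          rw [div_pow, ← exp_nat_mul]; norm_num; ring
      _ ≤ (𝔼 s, exp (√p / √S * rademacherSum A b s) - exp (p / 8)) ^ 2 :=
          pow_le_pow_left₀ (by positivity) (by linarith) 2
      _ ≤ _ := hPZ
      _ ≤ exp (2 * p) * P := by gcongr
  refine le_of_mul_le_mul_left ?_ (exp_pos (2 * p))
  calc exp (2 * p) * (exp (-(2 * p)) / 25) = 1 / 25 := by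
        rw [mul_div_assoc', ← exp_add, add_neg_cancel, exp_zero]
    _ ≤ exp (p / 2) / 25 := by gcongr; exact one_le_exp (by positivity)
    _ ≤ exp (2 * p) * P := hmain

lemma le_expect_abs_rademacherSum_pow {A : Finset ι} {b : ι → ℝ} {p : ℕ} (hp : 2 ≤ p)
    (hsmall : ∀ i ∈ A, p * b i ^ 2 ≤ ∑ j ∈ A, b j ^ 2) :
    (√p * √(∑ i ∈ A, b i ^ 2) / 400) ^ p ≤ 𝔼 s, |rademacherSum A b s| ^ p := by
  rcases (sum_nonneg fun i _ => sq_nonneg (b i) : 0 ≤ ∑ i ∈ A, b i ^ 2).eq_or_lt with h0 | hpos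
  · rw [← h0, sqrt_zero, mul_zero, zero_div, zero_pow (by omega)]
    exact expect_nonneg fun s _ => by positivity
  set τ := √p * √(∑ i ∈ A, b i ^ 2) / 8
  have hexp2 : (1 / 10 : ℝ) ≤ exp (-2) := by
    rw [exp_neg, le_inv_comm₀ (by norm_num) (exp_pos 2), show (2 : ℝ) = 1 + 1 by norm_num,
      exp_add]
    nlinarith [exp_one_lt_d9, exp_pos 1]
  calc (√p * √(∑ i ∈ A, b i ^ 2) / 400) ^ p = τ ^ p * ((1 / 10) ^ p * (1 / 5) ^ p) := by
        rw [← mul_pow, ← mul_pow]; simp only [τ]; ring_nf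
    _ ≤ τ ^ p * (exp (-2) ^ p * (1 / 5) ^ 2) := by
        gcongr τ ^ p * ?_
        exact mul_le_mul (pow_le_pow_left₀ (by norm_num) hexp2 p)
          (pow_le_pow_of_le_one (by norm_num) (by norm_num) hp) (by positivity) (by positivity)
    _ = τ ^ p * (exp (-(2 * p)) / 25) := by
        rw [← exp_nat_mul]; ring_nf
    _ ≤ τ ^ p * 𝔼 s, if τ ≤ rademacherSum A b s then (1 : ℝ) else 0 := by
        gcongr
        exact le_expect_ite_le_rademacherSum hp hpos hsmall
    _ ≤ 𝔼 s, |rademacherSum A b s| ^ p := by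
        rw [mul_expect]
        refine expect_le_expect fun s _ => ?_
        split_ifs with h
        · rw [mul_one]
          exact pow_le_pow_left₀ (by positivity) (h.trans (le_abs_self _)) p
        · rw [mul_zero]; positivity

end Cube

lemma sum_fin_filter_val_lt {M : Type*} [AddCommMonoid M] (n p : ℕ) (f : ℕ → M) :
    ∑ i ∈ univ.filter fun i : Fin n => (i : ℕ) < p, f i = ∑ i ∈ range (min p n), f i := by
  rw [sum_filter, Fin.sum_univ_eq_sum_range (fun i => if i < p then f i else 0), ← sum_filter]
  congr 1
  ext i
  simp only [mem_filter, mem_range]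
  omega

lemma sum_compl_fin_filter_val_lt {M : Type*} [AddCommMonoid M] (n p : ℕ) (f : ℕ → M) :
    ∑ i ∈ (univ.filter fun i : Fin n => (i : ℕ) < p)ᶜ, f i = ∑ i ∈ Ico p n, f i := by
  rw [compl_filter, sum_filter,
    Fin.sum_univ_eq_sum_range (fun i => if ¬i < p then f i else 0), ← sum_filter]
  congr 1
  ext i
  simp only [mem_filter, mem_range, mem_Ico]
  omega

/-- Up to universal constants, this is the K-functional `K(a, √p; ℓ¹, ℓ²)` of Montgomery-Smith. -/
noncomputable def kFunctional (a : ℕ → ℝ) (n p : ℕ) : ℝ :=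
  ∑ i ∈ range (min p n), a i + √p * √(∑ i ∈ Ico p n, a i ^ 2)

lemma kFunctional_nonneg {a : ℕ → ℝ} {n : ℕ} (ha : ∀ i < n, 0 ≤ a i) (p : ℕ) :
    0 ≤ kFunctional a n p :=
  add_nonneg (sum_nonneg fun i hi => ha i (lt_min_iff.1 (mem_range.1 hi)).2) (by positivity)

lemma expect_abs_rademacherSum_pow_le_kFunctional {n : ℕ} {a : ℕ → ℝ} (ha : ∀ i < n, 0 ≤ a i)
    {p : ℕ} (hp : p ≠ 0) :
    𝔼 s, |rademacherSum univ (fun i : Fin n => a i) s| ^ p ≤ (2 * kFunctional a n p) ^ p := by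
  refine (expect_abs_rademacherSum_pow_le_of_split (univ.filter fun i : Fin n => (i : ℕ) < p) _
    hp).trans_eq ?_
  rw [sum_congr rfl fun (i : Fin n) _ => abs_of_nonneg (ha i i.isLt), sum_fin_filter_val_lt,
    sum_compl_fin_filter_val_lt n p (fun j => a j ^ 2), kFunctional]

lemma sum_range_div_two_pow_le_expect_abs_rademacherSum_pow {n : ℕ} {a : ℕ → ℝ}
    (ha : ∀ i < n, 0 ≤ a i) (p : ℕ) :
    ((∑ i ∈ range (min p n), a i) / 2) ^ p ≤
      𝔼 s, |rademacherSum univ (fun i : Fin n => a i) s| ^ p := by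
  set A := univ.filter fun i : Fin n => (i : ℕ) < p
  have hcard : #A = min p n := by
    rw [card_eq_sum_ones, sum_fin_filter_val_lt n p (fun _ => 1), sum_const, card_range,
      smul_eq_mul, mul_one]
  calc ((∑ i ∈ range (min p n), a i) / 2) ^ p = (2 : ℝ)⁻¹ ^ p * (∑ i ∈ A, a i) ^ p := by
        rw [sum_fin_filter_val_lt, div_eq_inv_mul, mul_pow]
    _ ≤ (2 : ℝ)⁻¹ ^ #A * (∑ i ∈ A, a i) ^ p := by
        rw [hcard]
        exact mul_le_mul_of_nonneg_right
          (pow_le_pow_of_le_one (by norm_num) (by norm_num) (min_le_left p n))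
          (pow_nonneg (sum_nonneg fun (i : Fin n) _ => ha i i.isLt) p)
    _ ≤ _ := pow_sum_le_expect_abs_rademacherSum_pow A (fun i _ => ha i i.isLt) p
    _ ≤ _ := expect_abs_rademacherSum_pow_mono (subset_univ A) _ p

lemma sqrt_mul_sqrt_sum_Ico_le_sum_range {n : ℕ} {a : ℕ → ℝ} (ha : ∀ i < n, 0 ≤ a i)
    (hanti : ∀ i j, i ≤ j → j < n → a j ≤ a i) {p i : ℕ} (hpi : p ≤ i) (hin : i < n)
    (hlarge : ∑ j ∈ Ico p n, a j ^ 2 ≤ p * a i ^ 2) :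
    √p * √(∑ j ∈ Ico p n, a j ^ 2) ≤ ∑ j ∈ range (min p n), a j := by
  have hpa : p * a i ≤ ∑ j ∈ range p, a j := by
    have := card_nsmul_le_sum (range p) a (a i) fun j hj =>
      hanti j i ((mem_range.1 hj).le.trans hpi) hin
    rwa [card_range, nsmul_eq_mul] at this
  calc √p * √(∑ j ∈ Ico p n, a j ^ 2) ≤ √p * √(p * a i ^ 2) := by gcongr
    _ = p * a i := by
        rw [sqrt_mul (by positivity), sqrt_sq (ha i hin), ← mul_assoc,
          mul_self_sqrt (by positivity)]
    _ ≤ ∑ j ∈ range (min p n), a j := by rwa [min_eq_left (hpi.trans hin.le)]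

lemma kFunctional_div_pow_le_expect_abs_rademacherSum {n : ℕ} {a : ℕ → ℝ}
    (ha : ∀ i < n, 0 ≤ a i) (hanti : ∀ i j, i ≤ j → j < n → a j ≤ a i) {p : ℕ} (hp : 2 ≤ p) :
    (kFunctional a n p / 800) ^ p ≤ 𝔼 s, |rademacherSum univ (fun i : Fin n => a i) s| ^ p := by
  set A := univ.filter fun i : Fin n => (i : ℕ) < p
  set H := ∑ i ∈ range (min p n), a i
  set T := ∑ i ∈ Ico p n, a i ^ 2
  have hhead := sum_range_div_two_pow_le_expect_abs_rademacherSum_pow ha p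
  have hT : ∑ i ∈ Aᶜ, a i ^ 2 = T := sum_compl_fin_filter_val_lt n p (fun j => a j ^ 2)
  have hK : kFunctional a n p = H + √p * √T := rfl
  have hK0 := kFunctional_nonneg ha p
  by_cases hsmall : ∀ i ∈ Aᶜ, p * a i ^ 2 ≤ ∑ j ∈ Aᶜ, a j ^ 2
  · have htail : (√p * √T / 400) ^ p ≤
        𝔼 s, |rademacherSum univ (fun i : Fin n => a i) s| ^ p := by
      rw [← hT]
      exact (le_expect_abs_rademacherSum_pow hp hsmall).trans
        (expect_abs_rademacherSum_pow_mono (subset_univ _) _ p)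
    have hmax : kFunctional a n p / 800 ≤ max (H / 2) (√p * √T / 400) := by
      have := le_max_left (H / 2) (√p * √T / 400)
      have := le_max_right (H / 2) (√p * √T / 400)
      rw [hK]
      linarith
    refine (pow_le_pow_left₀ (by positivity) hmax p).trans ?_
    rcases max_choice (H / 2) (√p * √T / 400) with h | h <;> rw [h] <;> assumption
  obtain ⟨i, hi, hlarge⟩ := not_forall₂.1 hsmall
  have hτ : √p * √T ≤ H := sqrt_mul_sqrt_sum_Ico_le_sum_range ha hanti
    (by simpa [A] using hi) i.isLt (by have h := (not_le.1 hlarge).le; rwa [hT] at h)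
  exact (pow_le_pow_left₀ (by positivity) (by rw [hK]; linarith) p).trans hhead

noncomputable def fairCoin : Measure Bool :=
  (1 / 2 : ℝ≥0∞) • Measure.dirac true + (1 / 2 : ℝ≥0∞) • Measure.dirac false

instance : IsProbabilityMeasure fairCoin :=
  ⟨by simp [fairCoin, ENNReal.inv_two_add_inv_two]⟩

lemma map_boolSign_fairCoin :
    fairCoin.map boolSign =
      (1 / 2 : ℝ≥0∞) • Measure.dirac (1 : ℝ) + (1 / 2 : ℝ≥0∞) • Measure.dirac (-1 : ℝ) := by
  rw [fairCoin, Measure.map_add _ _ (measurable_of_finite _), Measure.map_smul, Measure.map_smul,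
    Measure.map_dirac' (measurable_of_finite _), Measure.map_dirac' (measurable_of_finite _)]
  simp [boolSign]

lemma measureReal_pi_fairCoin_singleton {ι : Type*} [Fintype ι] (s : ι → Bool) :
    (Measure.pi fun _ : ι => fairCoin).real {s} = 2⁻¹ ^ Fintype.card ι := by
  have hcoin (b : Bool) : fairCoin {b} = 2⁻¹ := by cases b <;> simp [fairCoin]
  rw [measureReal_def, ← Set.univ_pi_singleton, Measure.pi_pi]
  simp [hcoin]

lemma integral_comp_eq_expect_boolSign {ι : Type*} [Fintype ι] [DecidableEq ι] {Ω : Type*}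
    [MeasurableSpace Ω] {μ : Measure Ω} [IsProbabilityMeasure μ] {ε : ι → Ω → ℝ}
    (hε : ∀ i, Measurable (ε i)) (hindep : iIndepFun ε μ)
    (hlaw : ∀ i, μ.map (ε i) =
      (1 / 2 : ℝ≥0∞) • Measure.dirac (1 : ℝ) + (1 / 2 : ℝ≥0∞) • Measure.dirac (-1 : ℝ))
    {F : (ι → ℝ) → ℝ} (hF : Measurable F) :
    ∫ ω, F (fun i => ε i ω) ∂μ = 𝔼 s : ι → Bool, F (fun i => boolSign (s i)) := by
  have hjoint : μ.map (fun ω i => ε i ω) =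
      (Measure.pi fun _ => fairCoin).map fun s i => boolSign (s i) := by
    rw [hindep.map_fun_eq_pi_map fun i => (hε i).aemeasurable,
      Measure.pi_map_pi fun _ => (measurable_of_finite _).aemeasurable]
    simp_rw [hlaw, map_boolSign_fairCoin]
  rw [← integral_map (measurable_pi_lambda _ hε).aemeasurable hF.aestronglyMeasurable, hjoint,
    integral_map (measurable_of_finite _).aemeasurable hF.aestronglyMeasurable,
    integral_fintype .of_finite, Fintype.expect_eq_sum_div_card, sum_div]
  simp [measureReal_pi_fairCoin_singleton, div_eq_inv_mul]

end Rademacher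

open Rademacher in
theorem hitczenko_rademacher : ∃ c C : ℝ, 0 < c ∧ 0 < C ∧
    ∀ (Ω : Type) [MeasurableSpace Ω] (μ : Measure Ω) [IsProbabilityMeasure μ]
      (n : ℕ) (ε : Fin n → Ω → ℝ),
      (∀ i, Measurable (ε i)) →
      iIndepFun ε μ →
      (∀ i, μ.map (ε i) =
        (1 / 2 : ℝ≥0∞) • Measure.dirac (1 : ℝ) +
          (1 / 2 : ℝ≥0∞) • Measure.dirac (-1 : ℝ)) →
      ∀ (a : ℕ → ℝ),
      (∀ i, i < n → 0 ≤ a i) →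
      (∀ i j, i ≤ j → j < n → a j ≤ a i) →
      ∀ p : ℕ, 2 ≤ p →
        c * ((∑ i ∈ Finset.range (min p n), a i) +
            Real.sqrt p * Real.sqrt (∑ i ∈ Finset.Ico p n, (a i) ^ 2)) ≤
          (∫ ω, |∑ i : Fin n, a i.val * ε i ω| ^ (p : ℝ) ∂μ) ^ (1 / (p : ℝ)) ∧
        (∫ ω, |∑ i : Fin n, a i.val * ε i ω| ^ (p : ℝ) ∂μ) ^ (1 / (p : ℝ)) ≤
          C * ((∑ i ∈ Finset.range (min p n), a i) +
            Real.sqrt p * Real.sqrt (∑ i ∈ Finset.Ico p n, (a i) ^ 2)) := by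
  refine ⟨1 / 800, 2, by norm_num, by norm_num, ?_⟩
  intro Ω _ μ _ n ε hε hindep hlaw a ha hanti p hp
  have hmoment : ∫ ω, |∑ i : Fin n, a i * ε i ω| ^ (p : ℝ) ∂μ =
      𝔼 s, |rademacherSum univ (fun i : Fin n => a i) s| ^ p := by
    simp only [rpow_natCast]
    exact integral_comp_eq_expect_boolSign hε hindep hlaw
      (F := fun x => |∑ i : Fin n, a i * x i| ^ p) (by fun_prop)
  have hK := kFunctional_nonneg ha p
  have hp0 : (0 : ℝ) < p := by positivity
  rw [hmoment, one_div (p : ℝ)]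
  constructor
  · rw [le_rpow_inv_iff_of_pos (by positivity) (expect_nonneg fun s _ => by positivity) hp0,
      rpow_natCast, one_div_mul_eq_div]
    exact kFunctional_div_pow_le_expect_abs_rademacherSum ha hanti hp
  · rw [rpow_inv_le_iff_of_pos (expect_nonneg fun s _ => by positivity) (by positivity) hp0,
      rpow_natCast]
    exact expect_abs_rademacherSum_pow_le_kFunctional ha (by omega)
end

section
/- Let Z_1,…,Z_n be i.i.d. Rademacher signs, M, β ≥ 0, and g_i(Z) = M·Z_i + (β/2)·Z_i·∑_{j≠i} Z_j. Then there exist universal constants κ > 0 and c > 0 such that for every p with κ ≤ p ≤ n, ‖∑_{i=1}^n g_i(Z)‖_p ≥ c·(p·n·β + M·√(pn)). -/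
/-
The law of `(Zᵢ)` is the uniform measure on the sign cube `{±1}ⁿ`, on which
`∑ gᵢ = M S + (β/2)(S² - n)` with `S = ∑ Zᵢ`. Flipping every sign sends `S` to `-S`, so by
Minkowski the odd part `M S` and the even part `(β/2)(S² - n)` each have `Lᵖ` norm at most that of
the sum. Both are controlled by the even moments of `S`: splitting off one sign gives
`𝔼 S_{n+1}^{2k} ≥ 𝔼 S_n^{2k} + k(2k-1) 𝔼 S_n^{2k-2}`, and `k!² C(n,k)` satisfies the same recursion
with `k²` in place of `k(2k-1)`, so `𝔼 S^{2k} ≥ k!² C(n,k) ≥ (kn/2e)^k` for `2k ≤ n`. Taking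
`k = ⌊p/2⌋` and using monotonicity of `Lᵖ` norms in `p` yields `‖S‖_p ≳ √(pn)` and `‖S²‖_p ≳ pn`,
hence `‖S² - n‖_p ≥ ‖S²‖_p - n ≳ pn` once `p` is large.
-/

open MeasureTheory ProbabilityTheory Real
open scoped ENNReal BigOperators Nat

namespace ChaosLowerBound

open Finset

section cLpNorm

variable {ι : Type*} [Fintype ι]

noncomputable def cLpNorm (p : ℝ) (f : ι → ℝ) : ℝ := (𝔼 i, |f i| ^ p) ^ (1 / p)

lemma cLpNorm_nonneg (p : ℝ) (f : ι → ℝ) : 0 ≤ cLpNorm p f :=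
  rpow_nonneg (expect_nonneg fun _ _ => by positivity) _

lemma cLpNorm_eq_div (p : ℝ) (f : ι → ℝ) :
    cLpNorm p f = (∑ i, |f i| ^ p) ^ (1 / p) / (Fintype.card ι : ℝ) ^ (1 / p) := by
  rw [cLpNorm, expect_eq_sum_div_card, card_univ,
    div_rpow (sum_nonneg fun _ _ => by positivity) (Nat.cast_nonneg _)]

lemma cLpNorm_add_le {p : ℝ} (hp : 1 ≤ p) (f g : ι → ℝ) :
    cLpNorm p (fun i => f i + g i) ≤ cLpNorm p f + cLpNorm p g := by
  simp only [cLpNorm_eq_div, ← add_div]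
  gcongr
  exact Real.Lp_add_le univ f g hp

lemma cLpNorm_const_mul {p : ℝ} (hp : p ≠ 0) (c : ℝ) (f : ι → ℝ) :
    cLpNorm p (fun i => c * f i) = |c| * cLpNorm p f := by
  simp only [cLpNorm, abs_mul, mul_rpow (abs_nonneg c) (abs_nonneg _), ← mul_expect]
  rw [mul_rpow (by positivity) (expect_nonneg fun _ _ => by positivity), ← rpow_mul (abs_nonneg c),
    mul_one_div_cancel hp, rpow_one]

lemma cLpNorm_const [Nonempty ι] {p : ℝ} (hp : p ≠ 0) (c : ℝ) :
    cLpNorm p (fun _ : ι => c) = |c| := by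
  rw [cLpNorm, Fintype.expect_const, ← rpow_mul (abs_nonneg c), mul_one_div_cancel hp, rpow_one]

lemma cLpNorm_comp_equiv (p : ℝ) (e : ι ≃ ι) (f : ι → ℝ) :
    cLpNorm p (fun i => f (e i)) = cLpNorm p f := by
  rw [cLpNorm, cLpNorm, Fintype.expect_equiv e (fun i => |f (e i)| ^ p) (fun i => |f i| ^ p)
    fun _ => rfl]

lemma cLpNorm_le_cLpNorm_of_le [Nonempty ι] {p q : ℝ} (hq : 0 < q) (hqp : q ≤ p) (f : ι → ℝ) :
    cLpNorm q f ≤ cLpNorm p f := by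
  have hr : 1 ≤ p / q := (one_le_div hq).2 hqp
  have hA : 0 ≤ 𝔼 i, |f i| ^ p := expect_nonneg fun _ _ => by positivity
  have jensen : 𝔼 i, |f i| ^ q ≤ (𝔼 i, |f i| ^ p) ^ (q / p) := by
    have h := compact_inner_le_weight_mul_Lp_of_nonneg univ hr (w := fun _ => 1)
      (f := fun i => |f i| ^ q) (fun _ => zero_le_one) (fun _ => by positivity)
    simp only [one_mul, Fintype.expect_const, one_rpow] at h
    simpa only [← rpow_mul (abs_nonneg _), mul_div_cancel₀ _ hq.ne', inv_div] using h
  calc cLpNorm q f ≤ ((𝔼 i, |f i| ^ p) ^ (q / p)) ^ (1 / q) :=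
        rpow_le_rpow (expect_nonneg fun _ _ => by positivity) jensen (by positivity)
    _ = cLpNorm p f := by
        rw [cLpNorm, ← rpow_mul hA]
        congr 1
        field_simp

lemma cLpNorm_natCast (m : ℕ) (f : ι → ℝ) :
    cLpNorm m f = (𝔼 i, |f i| ^ m) ^ (1 / (m : ℝ)) := by
  simp only [cLpNorm, rpow_natCast]

lemma cLpNorm_le_of_odd_add_even {p : ℝ} (hp : 1 ≤ p) (σ : ι ≃ ι) {a b : ι → ℝ}
    (ha : ∀ i, a (σ i) = -a i) (hb : ∀ i, b (σ i) = b i) :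
    cLpNorm p a ≤ cLpNorm p (fun i => a i + b i) ∧
      cLpNorm p b ≤ cLpNorm p (fun i => a i + b i) := by
  have hp0 : p ≠ 0 := by positivity
  set g := fun i => a i + b i
  have hodd := cLpNorm_add_le hp g fun i => -1 * g (σ i)
  have heven := cLpNorm_add_le hp g fun i => g (σ i)
  have h2a : (fun i => g i + -1 * g (σ i)) = fun i => 2 * a i := by
    ext i; simp only [g, ha, hb]; ring
  have h2b : (fun i => g i + g (σ i)) = fun i => 2 * b i := by
    ext i; simp only [g, ha, hb]; ring
  rw [h2a, cLpNorm_const_mul hp0, cLpNorm_const_mul hp0, cLpNorm_comp_equiv] at hodd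
  rw [h2b, cLpNorm_const_mul hp0, cLpNorm_comp_equiv] at heven
  simp only [abs_two, abs_neg, abs_one, one_mul] at hodd heven
  constructor <;> linarith

lemma cLpNorm_div_two_sq {p : ℝ} (hp : p ≠ 0) (f : ι → ℝ) :
    cLpNorm (p / 2) (fun i => f i ^ 2) = cLpNorm p f ^ 2 := by
  have hA : 0 ≤ 𝔼 i, |f i| ^ p := expect_nonneg fun _ _ => by positivity
  have hpow : ∀ i, |f i ^ 2| ^ (p / 2) = |f i| ^ p := fun i => by
    rw [abs_pow, ← rpow_natCast, ← rpow_mul (abs_nonneg _)]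
    congr 1; push_cast; ring
  simp only [cLpNorm, hpow]
  rw [← rpow_natCast, ← rpow_mul hA]
  congr 1
  push_cast
  field_simp

end cLpNorm

def boolSign (b : Bool) : ℝ := if b then 1 else -1

def sumSigns {n : ℕ} (ε : Fin n → Bool) : ℝ := ∑ i, boolSign (ε i)

lemma sum_sumSigns_succ {n : ℕ} (f : ℝ → ℝ) :
    ∑ ε : Fin (n + 1) → Bool, f (sumSigns ε) =
      ∑ ε : Fin n → Bool, (f (sumSigns ε + 1) + f (sumSigns ε - 1)) := by
  rw [← (Fin.consEquiv fun _ => Bool).sum_comp, Fintype.sum_prod_type, Fintype.sum_bool,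
    ← sum_add_distrib]
  simp [sumSigns, Fin.sum_univ_succ, boolSign, Fin.consEquiv, sub_eq_add_neg, add_comm]

lemma expect_sumSigns_succ {n : ℕ} (f : ℝ → ℝ) :
    𝔼 ε : Fin (n + 1) → Bool, f (sumSigns ε) =
      𝔼 ε : Fin n → Bool, (f (sumSigns ε + 1) + f (sumSigns ε - 1)) / 2 := by
  simp only [expect_eq_sum_div_card, ← sum_div, sum_sumSigns_succ, card_univ, Fintype.card_pi,
    Fintype.card_bool, prod_const, Fintype.card_fin, pow_succ']
  push_cast
  rw [div_div, mul_comm]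

lemma sumSigns_not {n : ℕ} (ε : Fin n → Bool) : sumSigns (fun i => !ε i) = -sumSigns ε := by
  simp only [sumSigns, ← sum_neg_distrib]
  congr 1 with i
  cases ε i <;> simp [boolSign]

lemma le_add_one_pow_add_sub_one_pow (s : ℝ) (k : ℕ) :
    2 * s ^ (2 * k + 2) + (2 * k + 2) * (2 * k + 1) * s ^ (2 * k) ≤
      (s + 1) ^ (2 * k + 2) + (s - 1) ^ (2 * k + 2) := by
  have hterm : ∀ j < 2 * k, 0 ≤ s ^ j * ((2 * k + 2).choose j) * (1 + (-1) ^ (2 * k + 2 - j)) := by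
    intro j hj
    rcases Nat.even_or_odd j with hje | hjo
    · have : 0 ≤ 1 + (-1 : ℝ) ^ (2 * k + 2 - j) := by
        rcases neg_one_pow_eq_or ℝ (2 * k + 2 - j) with h | h <;> rw [h] <;> norm_num
      exact mul_nonneg (mul_nonneg (hje.pow_nonneg s) (Nat.cast_nonneg _)) this
    · rw [(Nat.Even.sub_odd (by omega) (by simp [parity_simps]) hjo).neg_one_pow]
      simp
  have hexp : (s + 1) ^ (2 * k + 2) + (s - 1) ^ (2 * k + 2) =
      ∑ j ∈ range (2 * k + 3), s ^ j * ((2 * k + 2).choose j) * (1 + (-1) ^ (2 * k + 2 - j)) := by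
    rw [sub_eq_add_neg, add_pow, add_pow, ← sum_add_distrib]
    refine sum_congr rfl fun j _ => ?_
    simp only [one_pow]; ring
  -- Odd-index terms vanish and the rest are nonnegative; keep only `j = 2k` and `j = 2k + 2`.
  rw [hexp, sum_range_succ, sum_range_succ, sum_range_succ]
  have hchoose : (((2 * k + 2).choose (2 * k) : ℕ) : ℝ) = (2 * k + 2) * (2 * k + 1) / 2 := by
    rw [Nat.choose_symm_add, Nat.cast_choose_two]; push_cast; ring
  simp only [hchoose, Nat.choose_self, show 2 * k + 2 - 2 * k = 2 by omega,
    show 2 * k + 2 - (2 * k + 1) = 1 by omega, Nat.sub_self]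
  nlinarith [sum_nonneg fun j hj => hterm j (mem_range.1 hj)]

lemma factorial_sq_mul_choose_le_expect_sumSigns_pow (n k : ℕ) :
    (k ! : ℝ) ^ 2 * n.choose k ≤ 𝔼 ε : Fin n → Bool, sumSigns ε ^ (2 * k) := by
  induction n generalizing k with
  | zero => cases k <;> simp [sumSigns]
  | succ n ih =>
    rw [expect_sumSigns_succ fun s => s ^ (2 * k)]
    rcases k with _ | j
    · simp
    have hpascal : ((j + 1) ! : ℝ) ^ 2 * (n + 1).choose (j + 1) =
        ((j + 1) ! : ℝ) ^ 2 * n.choose (j + 1) + (j + 1) ^ 2 * ((j ! : ℝ) ^ 2 * n.choose j) := by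
      rw [Nat.choose_succ_succ', Nat.factorial_succ]; push_cast; ring
    rw [hpascal, show 2 * (j + 1) = 2 * j + 2 by ring]
    calc _ ≤ 𝔼 ε : Fin n → Bool, sumSigns ε ^ (2 * j + 2) +
          (j + 1) * (2 * j + 1) * 𝔼 ε : Fin n → Bool, sumSigns ε ^ (2 * j) := by
          gcongr
          · exact ih (j + 1)
          · nlinarith
          · exact ih j
      _ = 𝔼 ε : Fin n → Bool,
            (sumSigns ε ^ (2 * j + 2) + (j + 1) * (2 * j + 1) * sumSigns ε ^ (2 * j)) := by
          rw [expect_add_distrib, mul_expect]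
      _ ≤ _ := expect_le_expect fun ε _ => by
          linarith [le_add_one_pow_add_sub_one_pow (sumSigns ε) j]

lemma pow_le_factorial_sq_mul_choose {n k : ℕ} (hkn : 2 * k ≤ n) :
    (k * n / (2 * exp 1)) ^ k ≤ (k ! : ℝ) ^ 2 * n.choose k := by
  have hfact : (k / exp 1) ^ k ≤ (k ! : ℝ) := by
    have h := pow_div_factorial_le_exp (k : ℝ) (Nat.cast_nonneg k) k
    rw [div_le_iff₀ (by positivity), ← exp_one_pow] at h
    rw [div_pow, div_le_iff₀ (by positivity)]
    linarith
  have hchoose : ((n / 2 : ℝ)) ^ k ≤ k ! * n.choose k := by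
    have h := Nat.pow_le_choose (α := ℝ) k n
    have hkn' : (2 * k : ℝ) ≤ n := by exact_mod_cast hkn
    rw [div_le_iff₀ (by positivity)] at h
    calc ((n / 2 : ℝ)) ^ k ≤ ((n + 1 - k : ℕ) : ℝ) ^ k := by
          gcongr
          rw [Nat.cast_sub (by omega)]
          push_cast
          linarith
      _ ≤ _ := by linarith
  calc (k * n / (2 * exp 1)) ^ k = (k / exp 1) ^ k * (n / 2) ^ k := by
        rw [← mul_pow]; ring_nf
    _ ≤ k ! * (k ! * n.choose k) := by gcongr
    _ = _ := by ring

lemma mul_div_le_cLpNorm_sumSigns_sq {n : ℕ} {q : ℝ} (hq : 2 ≤ q) (hqn : 2 * q ≤ n) :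
    q * n / 12 ≤ cLpNorm q fun ε : Fin n → Bool => sumSigns ε ^ 2 := by
  set k := ⌊q⌋₊
  have hkq : (k : ℝ) ≤ q := Nat.floor_le (by positivity)
  have hqk : q / 2 ≤ k := by linarith [Nat.sub_one_lt_floor q]
  have hk : (0 : ℝ) < k := by linarith
  have hkn : 2 * k ≤ n := by exact_mod_cast (by linarith : (2 * k : ℝ) ≤ n)
  have he : exp 1 ≤ 3 := by linarith [exp_one_lt_d9]
  calc q * n / 12 = q / 2 * n / 6 := by ring
    _ ≤ k * n / (2 * exp 1) := by gcongr; linarith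
    _ = ((k * n / (2 * exp 1)) ^ k) ^ (1 / (k : ℝ)) := by
        rw [← rpow_natCast, ← rpow_mul (by positivity), mul_one_div_cancel hk.ne', rpow_one]
    _ ≤ (𝔼 ε : Fin n → Bool, sumSigns ε ^ (2 * k)) ^ (1 / (k : ℝ)) := by
        gcongr
        exact (pow_le_factorial_sq_mul_choose hkn).trans
          (factorial_sq_mul_choose_le_expect_sumSigns_pow n k)
    _ = cLpNorm k fun ε : Fin n → Bool => sumSigns ε ^ 2 := by
        simp only [cLpNorm_natCast, abs_sq, ← pow_mul]
    _ ≤ _ := cLpNorm_le_cLpNorm_of_le hk hkq _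

lemma sqrt_le_cLpNorm_sumSigns {n : ℕ} {p : ℝ} (hp : 4 ≤ p) (hpn : p ≤ n) :
    √(p * n / 24) ≤ cLpNorm p fun ε : Fin n → Bool => sumSigns ε := by
  have h := mul_div_le_cLpNorm_sumSigns_sq (n := n) (q := p / 2) (by linarith) (by linarith)
  rw [cLpNorm_div_two_sq (by positivity)] at h
  rw [sqrt_le_iff]
  exact ⟨cLpNorm_nonneg _ _, by linarith⟩

lemma mul_div_le_cLpNorm_sumSigns_sq_sub {n : ℕ} {p : ℝ} (hp : 4 ≤ p) (hpn : p ≤ n) :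
    p * n / 24 - n ≤ cLpNorm p fun ε : Fin n → Bool => sumSigns ε ^ 2 - n := by
  have h := mul_div_le_cLpNorm_sumSigns_sq (n := n) (q := p / 2) (by linarith) (by linarith)
  have hmono := cLpNorm_le_cLpNorm_of_le (by linarith) (by linarith : p / 2 ≤ p)
    fun ε : Fin n → Bool => sumSigns ε ^ 2
  have htri := cLpNorm_add_le (by linarith : 1 ≤ p) (fun ε : Fin n → Bool => sumSigns ε ^ 2 - n)
    fun _ => (n : ℝ)
  rw [cLpNorm_const (by positivity), abs_of_nonneg (Nat.cast_nonneg _)] at htri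
  simp only [sub_add_cancel] at htri
  linarith

theorem le_cLpNorm_chaos {n : ℕ} {M β p : ℝ} (hM : 0 ≤ M) (hβ : 0 ≤ β) (hp : 48 ≤ p)
    (hpn : p ≤ n) :
    1 / 192 * (p * n * β + M * √(p * n)) ≤
      cLpNorm p fun ε : Fin n → Bool => M * sumSigns ε + β / 2 * (sumSigns ε ^ 2 - n) := by
  obtain ⟨hodd, heven⟩ := cLpNorm_le_of_odd_add_even (by linarith)
    (Equiv.piCongrRight fun _ => Equiv.boolNot)
    (a := fun ε : Fin n → Bool => M * sumSigns ε)
    (b := fun ε => β / 2 * (sumSigns ε ^ 2 - n))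
    (fun ε => by change M * sumSigns (fun i => !ε i) = _; rw [sumSigns_not, mul_neg])
    (fun ε => by change β / 2 * (sumSigns (fun i => !ε i) ^ 2 - n) = _; rw [sumSigns_not, neg_sq])
  rw [cLpNorm_const_mul (by positivity), abs_of_nonneg hM] at hodd
  rw [cLpNorm_const_mul (by positivity), abs_of_nonneg (by positivity)] at heven
  have hS := sqrt_le_cLpNorm_sumSigns (by linarith) hpn
  have hS2 := mul_div_le_cLpNorm_sumSigns_sq_sub (by linarith) hpn
  have hsqrt : √(p * n) / 5 ≤ √(p * n / 24) := by
    rw [sqrt_div' _ (by norm_num : (0 : ℝ) ≤ 24)]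
    gcongr
    rw [sqrt_le_iff]
    norm_num
  have hn : (n : ℝ) ≤ p * n / 48 := by nlinarith
  have hMpart : M * (√(p * n) / 5) ≤ _ :=
    (mul_le_mul_of_nonneg_left (hsqrt.trans hS) hM).trans hodd
  have hβpart : β / 2 * (p * n / 48) ≤ _ :=
    (mul_le_mul_of_nonneg_left (by linarith) (by positivity)).trans heven
  linarith [cLpNorm_nonneg p fun ε : Fin n → Bool => M * sumSigns ε + β / 2 * (sumSigns ε ^ 2 - n)]

noncomputable def rademacher : Measure ℝ :=
  (1 / 2 : ℝ≥0∞) • Measure.dirac 1 + (1 / 2 : ℝ≥0∞) • Measure.dirac (-1)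

noncomputable def fairCoin : Measure Bool :=
  (1 / 2 : ℝ≥0∞) • Measure.dirac true + (1 / 2 : ℝ≥0∞) • Measure.dirac false

lemma fairCoin_singleton (b : Bool) : fairCoin {b} = 2⁻¹ := by
  cases b <;> simp [fairCoin]

instance : IsProbabilityMeasure fairCoin :=
  ⟨by simp [fairCoin, ENNReal.inv_two_add_inv_two]⟩

lemma map_boolSign_fairCoin : fairCoin.map boolSign = rademacher := by
  have h : Measurable boolSign := measurable_of_finite _
  simp [fairCoin, rademacher, Measure.map_add _ _ h, Measure.map_smul, Measure.map_dirac' h,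
    boolSign]

lemma integral_comp_eq_expect {Ω ι : Type*} [MeasurableSpace Ω] [Fintype ι] [DecidableEq ι]
    (μ : Measure Ω) [IsProbabilityMeasure μ] (Z : ι → Ω → ℝ) (hZ : ∀ i, Measurable (Z i))
    (hind : iIndepFun Z μ) (hlaw : ∀ i, μ.map (Z i) = rademacher) {F : (ι → ℝ) → ℝ}
    (hF : Measurable F) :
    ∫ ω, F (fun i => Z i ω) ∂μ = 𝔼 ε : ι → Bool, F fun i => boolSign (ε i) := by
  have hsign : Measurable fun (ε : ι → Bool) i => boolSign (ε i) := measurable_of_finite _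
  have hlawvec : μ.map (fun ω i => Z i ω) =
      (Measure.pi fun _ : ι => fairCoin).map fun ε i => boolSign (ε i) := by
    rw [hind.map_fun_eq_pi_map fun i => (hZ i).aemeasurable,
      Measure.pi_map_pi fun _ => (measurable_of_finite boolSign).aemeasurable]
    simp only [hlaw, map_boolSign_fairCoin]
  rw [← integral_map (measurable_pi_lambda _ hZ).aemeasurable hF.aestronglyMeasurable, hlawvec,
    integral_map hsign.aemeasurable hF.aestronglyMeasurable, integral_fintype .of_finite]
  simp [Measure.real, fairCoin_singleton, expect_eq_sum_div_card, div_eq_inv_mul, mul_sum]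

section Identity

variable {ι : Type*} [Fintype ι] [DecidableEq ι]

lemma sum_mul_sum_erase (x : ι → ℝ) :
    ∑ i, x i * ∑ j ∈ univ.erase i, x j = (∑ i, x i) ^ 2 - ∑ i, x i ^ 2 := by
  simp only [sum_erase_eq_sub (mem_univ _), mul_sub, sum_sub_distrib, ← sum_mul, sq]

lemma sum_chaos_of_sq_eq_one (M c : ℝ) {x : ι → ℝ} (hx : ∀ i, x i ^ 2 = 1) :
    ∑ i, (M * x i + c * x i * ∑ j ∈ univ.erase i, x j) =
      M * ∑ i, x i + c * ((∑ i, x i) ^ 2 - Fintype.card ι) := by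
  simp only [sum_add_distrib, ← mul_sum, mul_assoc, sum_mul_sum_erase, hx, sum_const, card_univ,
    nsmul_one]

end Identity

end ChaosLowerBound

open ChaosLowerBound

theorem chaos_lower_bound : ∃ κ c : ℝ, 0 < κ ∧ 0 < c ∧
    ∀ (Ω : Type) [MeasurableSpace Ω] (μ : Measure Ω) [IsProbabilityMeasure μ]
      (n : ℕ) (Z : Fin n → Ω → ℝ),
      (∀ i, Measurable (Z i)) →
      iIndepFun Z μ →
      (∀ i, μ.map (Z i) =
        (1 / 2 : ℝ≥0∞) • Measure.dirac (1 : ℝ) +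
          (1 / 2 : ℝ≥0∞) • Measure.dirac (-1 : ℝ)) →
      ∀ M β : ℝ, 0 ≤ M → 0 ≤ β →
      ∀ p : ℝ, κ ≤ p → p ≤ n →
        c * (p * n * β + M * Real.sqrt (p * n)) ≤
          (∫ ω, |∑ i, (M * Z i ω +
            (β / 2) * Z i ω * ∑ j ∈ Finset.univ.erase i, Z j ω)| ^ p ∂μ) ^ (1 / p) := by
  refine ⟨48, 1 / 192, by norm_num, by norm_num, ?_⟩
  intro Ω _ μ _ n Z hZ hind hlaw M β hM hβ p hp hpn
  have hF : Measurable fun x : Fin n → ℝ =>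
      |∑ i, (M * x i + β / 2 * x i * ∑ j ∈ Finset.univ.erase i, x j)| ^ p := by
    fun_prop
  have hsign : ∀ ε : Fin n → Bool, ∀ i, boolSign (ε i) ^ 2 = 1 := fun ε i => by
    cases ε i <;> norm_num [boolSign]
  rw [integral_comp_eq_expect μ Z hZ hind hlaw hF]
  simp only [sum_chaos_of_sq_eq_one _ _ (hsign _), Fintype.card_fin]
  exact le_cLpNorm_chaos hM hβ hp hpn
end

section
/- Let S = ∑_{i=1}^n Z_i with Z_i i.i.d. Rademacher, and set S_+ = S·1[S ≥ 0]. Then for any p ≥ 1 and M, β ≥ 0, ‖M·S_+ + (β/2)·S_+²‖_p ≥ ‖S_+‖_p · max(M, (β/2)·‖S_+‖_p). -/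
/-!
Write `X = S₊ ≥ 0` and `g = (M X + (β/2) X²)^p`. Pointwise `g` dominates both `(M X)^p` and
`((β/2) X²)^p`, so `E g ≥ M^p E X^p` and `E g ≥ (β/2)^p E[(X^p)²] ≥ (β/2)^p (E X^p)²`, the last step
being `Var (X^p) ≥ 0`. Taking `p`-th roots gives the two lower bounds whose maximum is the claim.
Since `|Z_i| ≤ 1` almost surely, `X ≤ n` and all moments involved are finite.
-/

open MeasureTheory ProbabilityTheory Real
open scoped ENNReal

lemma sq_integral_le_integral_sq {Ω : Type*} [MeasurableSpace Ω] {μ : Measure Ω}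
    [IsProbabilityMeasure μ] {f : Ω → ℝ} (hf : MemLp f 2 μ) :
    (∫ ω, f ω ∂μ) ^ 2 ≤ ∫ ω, f ω ^ 2 ∂μ :=
  sub_nonneg.1 (variance_eq_sub hf ▸ variance_nonneg f μ)

lemma memLp_top_rpow_of_ae_le {Ω : Type*} [MeasurableSpace Ω] {μ : Measure Ω} {f : Ω → ℝ}
    (hf : AEStronglyMeasurable f μ) (hf0 : ∀ ω, 0 ≤ f ω) {C : ℝ} (hfC : ∀ᵐ ω ∂μ, f ω ≤ C)
    {q : ℝ} (hq : 0 ≤ q) : MemLp (fun ω => f ω ^ q) ∞ μ := by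
  refine memLp_top_of_bound ((continuous_rpow_const hq).comp_aestronglyMeasurable hf) (C ^ q) ?_
  filter_upwards [hfC] with ω hω
  rw [norm_of_nonneg (rpow_nonneg (hf0 ω) q)]
  exact rpow_le_rpow (hf0 ω) hω hq

lemma rpow_one_div_mul_max_le {p a b M c : ℝ} (hp : 0 < p) (ha : 0 ≤ a) (hb : 0 ≤ b)
    (hM : 0 ≤ M) (hc : 0 ≤ c) (hMb : M ^ p * a ≤ b) (hcb : c ^ p * a ^ 2 ≤ b) :
    a ^ (1 / p) * max M (c * a ^ (1 / p)) ≤ b ^ (1 / p) := by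
  set x := a ^ (1 / p) with hx
  have hx0 : 0 ≤ x := by positivity
  have hxp : x ^ p = a := by rw [hx, one_div, rpow_inv_rpow ha hp.ne']
  rw [mul_max_of_nonneg _ _ hx0, one_div]
  refine max_le ((le_rpow_inv_iff_of_pos (by positivity) hb hp).2 ?_)
    ((le_rpow_inv_iff_of_pos (by positivity) hb hp).2 ?_)
  · rwa [mul_rpow hx0 hM, hxp, mul_comm]
  · rwa [show x * (c * x) = c * x ^ 2 by ring, mul_rpow hc (by positivity),
      ← rpow_pow_comm hx0, hxp]

theorem rpow_integral_mul_max_le {Ω : Type*} [MeasurableSpace Ω] {μ : Measure Ω}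
    [IsProbabilityMeasure μ] {X : Ω → ℝ} (hX : ∀ ω, 0 ≤ X ω) {p M c : ℝ} (hp : 0 < p)
    (hM : 0 ≤ M) (hc : 0 ≤ c) (hXp : MemLp (fun ω => X ω ^ p) 2 μ)
    (hint : Integrable (fun ω => (M * X ω + c * X ω ^ 2) ^ p) μ) :
    (∫ ω, X ω ^ p ∂μ) ^ (1 / p) * max M (c * (∫ ω, X ω ^ p ∂μ) ^ (1 / p)) ≤
      (∫ ω, (M * X ω + c * X ω ^ 2) ^ p ∂μ) ^ (1 / p) := by
  have hlin : ∀ ω, M ^ p * X ω ^ p ≤ (M * X ω + c * X ω ^ 2) ^ p := fun ω => by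
    have := hX ω
    rw [← mul_rpow hM this]
    exact rpow_le_rpow (by positivity) (by nlinarith [mul_nonneg hc (sq_nonneg (X ω))]) hp.le
  have hquad : ∀ ω, c ^ p * (X ω ^ p) ^ 2 ≤ (M * X ω + c * X ω ^ 2) ^ p := fun ω => by
    have := hX ω
    rw [rpow_pow_comm this, ← mul_rpow hc (by positivity)]
    exact rpow_le_rpow (by positivity) (by nlinarith [mul_nonneg hM this]) hp.le
  refine rpow_one_div_mul_max_le hp (integral_nonneg fun ω => by have := hX ω; positivity)
    (integral_nonneg fun ω => by have := hX ω; positivity) hM hc ?_ ?_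
  · rw [← integral_const_mul]
    exact integral_mono ((hXp.integrable one_le_two).const_mul _) hint hlin
  · calc c ^ p * (∫ ω, X ω ^ p ∂μ) ^ 2
        ≤ c ^ p * ∫ ω, (X ω ^ p) ^ 2 ∂μ := by gcongr; exact sq_integral_le_integral_sq hXp
      _ = ∫ ω, c ^ p * (X ω ^ p) ^ 2 ∂μ := (integral_const_mul _ _).symm
      _ ≤ _ := integral_mono (hXp.integrable_sq.const_mul _) hint hquad

lemma ae_abs_le_one_of_map_eq_rademacher {Ω : Type*} [MeasurableSpace Ω] {μ : Measure Ω}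
    {Z : Ω → ℝ} (hZ : AEMeasurable Z μ)
    (hrad : μ.map Z = (1 / 2 : ℝ≥0∞) • Measure.dirac (1 : ℝ) +
      (1 / 2 : ℝ≥0∞) • Measure.dirac (-1 : ℝ)) :
    ∀ᵐ ω ∂μ, |Z ω| ≤ 1 := by
  refine ae_of_ae_map (p := fun x => |x| ≤ 1) hZ ?_
  rw [hrad, ae_add_measure_iff]
  constructor <;> refine Measure.ae_smul_measure ?_ _ <;> simp

lemma ae_abs_sum_le_card {Ω ι : Type*} [MeasurableSpace Ω] [Fintype ι] {μ : Measure Ω}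
    {Z : ι → Ω → ℝ} (hZ : ∀ i, ∀ᵐ ω ∂μ, |Z i ω| ≤ 1) :
    ∀ᵐ ω ∂μ, |∑ i, Z i ω| ≤ Fintype.card ι := by
  filter_upwards [ae_all_iff.2 hZ] with ω hω
  calc |∑ i, Z i ω| ≤ ∑ i, |Z i ω| := Finset.abs_sum_le_sum_abs _ _
    _ ≤ ∑ _i : ι, (1 : ℝ) := Finset.sum_le_sum fun i _ => hω i
    _ = Fintype.card ι := by simp

theorem positive_part_moment_lower_general {Ω : Type*} [MeasurableSpace Ω]
    (μ : Measure Ω) [IsProbabilityMeasure μ] (n : ℕ)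
    (Z : Fin n → Ω → ℝ) (hZ : ∀ i, Measurable (Z i))
    (hrad : ∀ i, μ.map (Z i) =
      (1 / 2 : ℝ≥0∞) • Measure.dirac (1 : ℝ) +
        (1 / 2 : ℝ≥0∞) • Measure.dirac (-1 : ℝ))
    (p : ℝ) (hp : 1 ≤ p) (M β : ℝ) (hM : 0 ≤ M) (hβ : 0 ≤ β) :
    (∫ ω, |max (∑ i, Z i ω) 0| ^ p ∂μ) ^ (1 / p) *
        max M ((β / 2) * (∫ ω, |max (∑ i, Z i ω) 0| ^ p ∂μ) ^ (1 / p)) ≤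
      (∫ ω, |M * max (∑ i, Z i ω) 0 +
        (β / 2) * (max (∑ i, Z i ω) 0) ^ 2| ^ p ∂μ) ^ (1 / p) := by
  set X : Ω → ℝ := fun ω => max (∑ i, Z i ω) 0
  have hX : ∀ ω, 0 ≤ X ω := fun ω => le_max_right _ _
  have hXmeas : Measurable X := (Finset.measurable_sum _ fun i _ => hZ i).max measurable_const
  have hXn : ∀ᵐ ω ∂μ, X ω ≤ n := by
    filter_upwards [ae_abs_sum_le_card fun i =>
      ae_abs_le_one_of_map_eq_rademacher (hZ i).aemeasurable (hrad i)] with ω hω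
    rw [Fintype.card_fin] at hω
    exact max_le ((le_abs_self _).trans hω) n.cast_nonneg
  have hgn : ∀ᵐ ω ∂μ, M * X ω + β / 2 * X ω ^ 2 ≤ M * n + β / 2 * n ^ 2 :=
    hXn.mono fun ω hω => by have := hX ω; gcongr
  have hp0 : 0 < p := by linarith
  have habs : ∀ x : ℝ, |M * max x 0 + β / 2 * max x 0 ^ 2| = M * max x 0 + β / 2 * max x 0 ^ 2 :=
    fun x => abs_of_nonneg (by positivity)
  simp only [abs_of_nonneg (le_max_right _ (0 : ℝ)), habs]
  exact rpow_integral_mul_max_le hX hp0 hM (by positivity)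
    ((memLp_top_rpow_of_ae_le hXmeas.aestronglyMeasurable hX hXn hp0.le).mono_exponent le_top)
    ((memLp_top_rpow_of_ae_le (by fun_prop : Measurable _).aestronglyMeasurable
      (fun ω => by have := hX ω; positivity) hgn hp0.le).integrable le_top)

theorem positive_part_moment_lower {Ω : Type*} [MeasurableSpace Ω]
    (μ : Measure Ω) [IsProbabilityMeasure μ] (n : ℕ)
    (Z : Fin n → Ω → ℝ) (hZ : ∀ i, Measurable (Z i))
    (hindep : iIndepFun Z μ)
    (hrad : ∀ i, μ.map (Z i) =
      (1 / 2 : ℝ≥0∞) • Measure.dirac (1 : ℝ) +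
        (1 / 2 : ℝ≥0∞) • Measure.dirac (-1 : ℝ))
    (p : ℝ) (hp : 1 ≤ p) (M β : ℝ) (hM : 0 ≤ M) (hβ : 0 ≤ β) :
    (∫ ω, |max (∑ i, Z i ω) 0| ^ p ∂μ) ^ (1 / p) *
        max M ((β / 2) * (∫ ω, |max (∑ i, Z i ω) 0| ^ p ∂μ) ^ (1 / p)) ≤
      (∫ ω, |M * max (∑ i, Z i ω) 0 +
        (β / 2) * (max (∑ i, Z i ω) 0) ^ 2| ^ p ∂μ) ^ (1 / p) :=
  positive_part_moment_lower_general μ n Z hZ hrad p hp M β hM hβ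
end
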